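/- arXiv:2012.07200 — 6 statements merged into one kernel-verified Lean document; each statement's English description precedes it below -/
import Mathlib

section
/- Let g be a finite-dimensional complex Lie algebra with ind g = 1 and whose center Z(g) is nontrivial. Then dim g is odd and g is contact; moreover there exists a contact form φ ∈ g* that is regular (dim ker B_φ = 1) and satisfies φ(z) ≠ 0 for some nonzero central element z. -/
/-! A central `z ≠ 0` lies in `ker B_φ` for every `φ`, so index one gives some `φ₀` with
`ker B_φ₀ = ℂ z`. Bordering `B_φ` by a functional `ψ` with `ψ z ≠ 0` gives an alternating form
on `g × ℂ` which is nondegenerate exactly when `ker B_φ = ℂ z`. Along the line `φ₀ + t ψ` this is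
a polynomial condition on `t` holding at `t = 0`, hence for all but finitely many `t`, so some `φ`
on the line also has `φ z ≠ 0`. Bordering this `φ` by itself yields `\widehat{B}_φ`, which is
therefore nonsingular, and a nondegenerate alternating form lives in even dimension `dim g + 1`. -/

open Matrix

attribute [local instance 100] LieRing.ofAssociativeRing

/-- A finite poset on `Fin n`, compatible with the natural order on `Fin n`. -/
structure FinPoset (n : ℕ) where
  le : Fin n → Fin n → Prop
  le_refl : ∀ i, le i i
  le_antisymm : ∀ i j, le i j → le j i → i = j
  le_trans : ∀ i j k, le i j → le j k → le i k
  le_compat : ∀ i j, le i j → i ≤ j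

namespace FinPoset

/-- Strict relation of the poset. -/
def lt {n : ℕ} (P : FinPoset n) (i j : Fin n) : Prop := P.le i j ∧ i ≠ j

end FinPoset

/-- The type-A Lie poset algebra: trace-zero matrices supported on the relations of `P`. -/
def gA {n : ℕ} (P : FinPoset n) : LieSubalgebra ℂ (Matrix (Fin n) (Fin n) ℂ) where
  carrier := {M | Matrix.trace M = 0 ∧ ∀ i j, ¬ P.le i j → M i j = 0}
  add_mem' := by
    rintro a b ⟨ha1, ha2⟩ ⟨hb1, hb2⟩
    exact ⟨by simp [Matrix.trace_add, ha1, hb1],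
      fun i j h => by simp [Matrix.add_apply, ha2 i j h, hb2 i j h]⟩
  zero_mem' := ⟨Matrix.trace_zero _ _, fun _ _ _ => rfl⟩
  smul_mem' := by
    rintro c a ⟨ha1, ha2⟩
    exact ⟨by simp [Matrix.trace_smul, ha1],
      fun i j h => by simp [Matrix.smul_apply, ha2 i j h]⟩
  lie_mem' := by
    rintro a b ⟨ha1, ha2⟩ ⟨hb1, hb2⟩
    refine ⟨by simp [Ring.lie_def, Matrix.trace_sub, Matrix.trace_mul_comm a b], ?_⟩
    intro i j h
    simp only [Ring.lie_def, Matrix.sub_apply, Matrix.mul_apply]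
    rw [Finset.sum_eq_zero, Finset.sum_eq_zero, sub_zero]
    · intro k _
      by_cases hbk : P.le i k
      · have : ¬ P.le k j := fun hkj => h (P.le_trans i k j hbk hkj)
        simp [ha2 k j this]
      · simp [hb2 i k hbk]
    · intro k _
      by_cases hak : P.le i k
      · have : ¬ P.le k j := fun hkj => h (P.le_trans i k j hak hkj)
        simp [hb2 k j this]
      · simp [ha2 i k hak]

/-- The extended skew-symmetric matrix `\widehat{B}_φ` attached to an ordered
basis-like family `E` and a functional `φ`. -/
def hatB {g : Type*} [LieRing g] [LieAlgebra ℂ g] {m : ℕ}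
    (E : Fin m → g) (φ : Module.Dual ℂ g) : Matrix (Fin (m + 1)) (Fin (m + 1)) ℂ :=
  Matrix.of fun i j =>
    Fin.cases
      (Fin.cases 0 (fun j' => φ (E j')) j)
      (fun i' => Fin.cases (-(φ (E i'))) (fun j' => φ ⁅E i', E j'⁆) j)
      i

/-- `φ` is a contact form on `g`: `g` has odd dimension `2k+1` and the matrix
`\widehat{B}_φ` with respect to a basis is nonsingular. -/
def IsContactForm (g : Type*) [LieRing g] [LieAlgebra ℂ g] (φ : Module.Dual ℂ g) : Prop :=
  ∃ (k : ℕ) (E : Module.Basis (Fin (2 * k + 1)) ℂ g), (hatB (⇑E) φ).det ≠ 0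

/-- `g` is a contact Lie algebra. -/
def IsContact (g : Type*) [LieRing g] [LieAlgebra ℂ g] : Prop :=
  ∃ φ : Module.Dual ℂ g, IsContactForm g φ

/-- The kernel of the Kirillov form `B_φ(x,y) = φ⁅x,y⁆`. -/
def kerB {g : Type*} [LieRing g] [LieAlgebra ℂ g] (φ : Module.Dual ℂ g) : Submodule ℂ g where
  carrier := {x | ∀ y, φ ⁅x, y⁆ = 0}
  add_mem' := by intro a b ha hb; intro y; simp [add_lie, ha y, hb y]
  zero_mem' := by intro y; simp
  smul_mem' := by intro c x hx; intro y; simp [smul_lie, hx y]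

/-- The index of a Lie algebra: the minimal dimension of `ker B_φ`. -/
noncomputable def lieIndex (g : Type*) [LieRing g] [LieAlgebra ℂ g] : ℕ :=
  sInf {d | ∃ φ : Module.Dual ℂ g, Module.finrank ℂ (kerB φ) = d}

/-- The Hasse diagram of `P` as a simple graph on `Fin n`. -/
def hasse {n : ℕ} (P : FinPoset n) : SimpleGraph (Fin n) :=
  SimpleGraph.fromRel (fun i j => P.lt i j ∧ ∀ k, ¬ (P.lt i k ∧ P.lt k j))

/-- The Hasse diagram of the subposet of `P` induced on `S`. -/
def hasseOn {n : ℕ} (P : FinPoset n) (S : Set (Fin n)) : SimpleGraph S :=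
  SimpleGraph.fromRel (fun i j => P.lt i j ∧ ∀ k : S, ¬ (P.lt i k ∧ P.lt k j))

/-- The set of extremal (minimal or maximal) elements of `P`. -/
def extSet {n : ℕ} (P : FinPoset n) : Set (Fin n) :=
  {i | (∀ j, ¬ P.lt j i) ∨ (∀ j, ¬ P.lt i j)}

/-- The extremal elements of the subposet of `P` induced on `S`. -/
def extIn {n : ℕ} (P : FinPoset n) (S : Set (Fin n)) : Set (Fin n) :=
  {i | i ∈ S ∧ ((∀ j ∈ S, ¬ P.lt j i) ∨ (∀ j ∈ S, ¬ P.lt i j))}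

/-- The set of elements comparable to `i` (underlying set of `P^i`). -/
def cone {n : ℕ} (P : FinPoset n) (i : Fin n) : Set (Fin n) :=
  {j | P.le j i ∨ P.le i j}

/-- `D(P,i)`: the number of elements strictly below `i`. -/
noncomputable def downDeg {n : ℕ} (P : FinPoset n) (i : Fin n) : ℕ :=
  Set.ncard {j | P.lt j i}

/-- `U(P,i)`: the number of elements strictly above `i`. -/
noncomputable def upDeg {n : ℕ} (P : FinPoset n) (i : Fin n) : ℕ :=
  Set.ncard {j | P.lt i j}

/-- `P` has a chain of cardinality `m`. -/
def hasChain {n : ℕ} (P : FinPoset n) (m : ℕ) : Prop :=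
  ∃ s : Finset (Fin n), s.card = m ∧ ∀ i ∈ s, ∀ j ∈ s, P.le i j ∨ P.le j i

/-- `P` has height exactly `h`: it has a chain of cardinality `h+1` but none of
cardinality `h+2`. -/
def heightEq {n : ℕ} (P : FinPoset n) (h : ℕ) : Prop :=
  hasChain P (h + 1) ∧ ¬ hasChain P (h + 2)

namespace Matrix

variable {n R : Type*} [Fintype n] [DecidableEq n]

theorem det_eq_zero_of_transpose_eq_neg [CommRing R] [NoZeroDivisors R] [CharZero R]
    {M : Matrix n n R} (hM : Mᵀ = -M) (hn : Odd (Fintype.card n)) : M.det = 0 := by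
  have h : M.det = -M.det := by
    conv_lhs => rw [← det_transpose, hM, det_neg, hn.neg_one_pow, neg_one_mul]
  exact add_self_eq_zero.mp (by linear_combination h)

theorem finite_setOf_det_add_smul_eq_zero [CommRing R] [IsDomain R] (A B : Matrix n n R)
    (hA : A.det ≠ 0) : {t : R | (A + t • B).det = 0}.Finite := by
  open Polynomial in
  have hp : det ((X : R[X]) • B.map C + A.map C) ≠ 0 := fun h =>
    hA (by rw [← coeff_det_X_add_C_zero B A, h, coeff_zero])
  have hev (t : R) : (det ((X : R[X]) • B.map C + A.map C)).eval t = (A + t • B).det := by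
    rw [← coe_evalRingHom, RingHom.map_det]
    congr 1
    ext i j
    simp only [RingHom.mapMatrix_apply, map_apply, add_apply, smul_apply, smul_eq_mul,
      coe_evalRingHom, eval_add, eval_mul, eval_X, eval_C]
    ring
  refine (finite_setOfPred_isRoot hp).subset fun t ht => ?_
  simpa [IsRoot, hev] using ht

end Matrix

namespace LinearMap.BilinForm

variable {K V : Type*} [Field K] [AddCommGroup V] [Module K V] [FiniteDimensional K V]

theorem even_finrank_of_isAlt [CharZero K] {B : LinearMap.BilinForm K V} (hB : B.Nondegenerate)
    (halt : B.IsAlt) : Even (Module.finrank K V) := by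
  let b := Module.finBasis K V
  have hdet : (toMatrix b B).det ≠ 0 := (nondegenerate_iff_det_ne_zero b).mp hB
  have hskew : (toMatrix b B)ᵀ = -toMatrix b B := by
    ext i j
    simp [toMatrix_apply, ← LinearMap.IsAlt.neg halt (b i) (b j)]
  by_contra hodd
  refine hdet (Matrix.det_eq_zero_of_transpose_eq_neg hskew ?_)
  simpa using Nat.not_even_iff_odd.mp hodd

theorem finite_setOf_not_nondegenerate_add_smul {B : LinearMap.BilinForm K V}
    (C : LinearMap.BilinForm K V) (hB : B.Nondegenerate) :
    {t : K | ¬(B + t • C).Nondegenerate}.Finite := by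
  let b := Module.finBasis K V
  refine (Matrix.finite_setOf_det_add_smul_eq_zero _ (toMatrix b C)
    ((nondegenerate_iff_det_ne_zero b).mp hB)).subset fun t ht => ?_
  simpa [nondegenerate_iff_det_ne_zero b] using ht

end LinearMap.BilinForm

section Bordered

variable {g : Type*} [LieRing g] [LieAlgebra ℂ g]

theorem mem_kerB_of_forall_lie_eq_zero {z : g} (hz : ∀ y : g, ⁅z, y⁆ = 0)
    (φ : Module.Dual ℂ g) : z ∈ kerB φ := fun y => by rw [hz y, map_zero]

theorem kerB_eq_span_of_finrank_eq_one [Module.Finite ℂ g] {z : g} (hz0 : z ≠ 0)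
    (hz : ∀ y : g, ⁅z, y⁆ = 0) {φ : Module.Dual ℂ g} (hφ : Module.finrank ℂ (kerB φ) = 1) :
    kerB φ = ℂ ∙ z :=
  (Submodule.eq_of_le_of_finrank_le
    ((Submodule.span_singleton_le_iff_mem _ _).mpr (mem_kerB_of_forall_lie_eq_zero hz φ))
    (by rw [hφ, finrank_span_singleton hz0])).symm

theorem exists_finrank_kerB_eq_one (hind : lieIndex g = 1) :
    ∃ φ : Module.Dual ℂ g, Module.finrank ℂ (kerB φ) = 1 := by
  have h := Nat.sInf_mem
    (⟨_, 0, rfl⟩ : {d | ∃ φ : Module.Dual ℂ g, Module.finrank ℂ (kerB φ) = d}.Nonempty)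
  rwa [← lieIndex, hind] at h

noncomputable def kirillovForm (φ : Module.Dual ℂ g) : LinearMap.BilinForm ℂ g :=
  LinearMap.mk₂ ℂ (fun x y => φ ⁅x, y⁆)
    (by simp [add_lie]) (by simp [smul_lie]) (by simp [lie_add]) (by simp [lie_smul])

/-- `B_φ` bordered by `ψ`: the `ℂ` factor carries the border row and column of `\widehat{B}`. -/
noncomputable def borderedForm (φ ψ : Module.Dual ℂ g) : LinearMap.BilinForm ℂ (g × ℂ) :=
  LinearMap.mk₂ ℂ (fun p q => p.2 * ψ q.1 - q.2 * ψ p.1 + φ ⁅p.1, q.1⁆)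
    (by intros; simp [add_lie]; ring) (by intros; simp [smul_lie]; ring)
    (by intros; simp [lie_add]; ring) (by intros; simp [lie_smul]; ring)

@[simp]
theorem borderedForm_apply (φ ψ : Module.Dual ℂ g) (p q : g × ℂ) :
    borderedForm φ ψ p q = p.2 * ψ q.1 - q.2 * ψ p.1 + φ ⁅p.1, q.1⁆ :=
  rfl

theorem borderedForm_isAlt (φ ψ : Module.Dual ℂ g) : LinearMap.IsAlt (borderedForm φ ψ) :=
  fun p => by simp

theorem borderedForm_add_smul (φ χ ψ : Module.Dual ℂ g) (t : ℂ) :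
    borderedForm (φ + t • χ) ψ = borderedForm φ ψ +
      t • (kirillovForm χ).compl₁₂ (LinearMap.fst ℂ g ℂ) (LinearMap.fst ℂ g ℂ) := by
  refine LinearMap.ext₂ fun p q => ?_
  simp [kirillovForm]
  ring

theorem borderedForm_nondegenerate_iff {z : g} (hz : ∀ y : g, ⁅z, y⁆ = 0)
    {φ ψ : Module.Dual ℂ g} (hψ : ψ z ≠ 0) :
    (borderedForm φ ψ).Nondegenerate ↔ kerB φ = ℂ ∙ z := by
  rw [LinearMap.BilinForm.Nondegenerate,
    (borderedForm_isAlt φ ψ).isRefl.nondegenerate_iff_separatingLeft]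
  constructor
  · intro hsep
    refine le_antisymm (fun x hx => ?_)
      ((Submodule.span_singleton_le_iff_mem _ _).mpr (mem_kerB_of_forall_lie_eq_zero hz φ))
    -- subtracting a multiple of `z` makes `x` orthogonal to the border as well
    set x' := x - (ψ x / ψ z) • z
    have hx' : x' ∈ kerB φ :=
      sub_mem hx (Submodule.smul_mem _ _ (mem_kerB_of_forall_lie_eq_zero hz φ))
    have hψx' : ψ x' = 0 := by simp [x', hψ]
    have : (x', (0 : ℂ)) = 0 := hsep _ fun q => by simp [hψx', hx' q.1]
    rw [Submodule.mem_span_singleton]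
    exact ⟨ψ x / ψ z, (sub_eq_zero.mp (congrArg Prod.fst this)).symm⟩
  · intro hker ⟨x, a⟩ hp
    have hψx : ψ x = 0 := by simpa using hp (0, 1)
    have hxz : ⁅x, z⁆ = 0 := by rw [← lie_skew, hz, neg_zero]
    have ha : a = 0 := by simpa [hxz, hψ] using hp (z, 0)
    have hx : x ∈ kerB φ := fun y => by simpa [ha] using hp (y, 0)
    obtain ⟨c, rfl⟩ := Submodule.mem_span_singleton.mp (hker ▸ hx)
    have hc : c = 0 := by simpa [hψ] using hψx
    simp [hc, ha]

theorem odd_finrank_of_borderedForm_nondegenerate [Module.Finite ℂ g] {φ ψ : Module.Dual ℂ g}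
    (h : (borderedForm φ ψ).Nondegenerate) : Odd (Module.finrank ℂ g) := by
  have := LinearMap.BilinForm.even_finrank_of_isAlt h (borderedForm_isAlt φ ψ)
  rw [Module.finrank_prod, Module.finrank_self] at this
  exact Nat.not_even_iff_odd.mp (Nat.even_add_one.mp this)

theorem exists_kerB_eq_span_apply_ne_zero [Module.Finite ℂ g] {z : g} (hz0 : z ≠ 0)
    (hz : ∀ y : g, ⁅z, y⁆ = 0) {φ₀ : Module.Dual ℂ g} (hφ₀ : kerB φ₀ = ℂ ∙ z) :
    ∃ φ : Module.Dual ℂ g, kerB φ = ℂ ∙ z ∧ φ z ≠ 0 := by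
  obtain ⟨ψ, hψ⟩ : ∃ ψ : Module.Dual ℂ g, ψ z ≠ 0 := by
    by_contra! h
    exact hz0 ((Module.forall_dual_apply_eq_zero_iff ℂ z).mp h)
  have hbad := LinearMap.BilinForm.finite_setOf_not_nondegenerate_add_smul
    ((kirillovForm ψ).compl₁₂ (LinearMap.fst ℂ g ℂ) (LinearMap.fst ℂ g ℂ))
    ((borderedForm_nondegenerate_iff hz hψ).mpr hφ₀)
  obtain ⟨t, ht⟩ := (hbad.union (Set.finite_singleton (-φ₀ z / ψ z))).infinite_compl.nonempty
  rw [Set.mem_compl_iff, Set.mem_union, not_or, Set.mem_ofPred_eq, not_not,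
    ← borderedForm_add_smul, borderedForm_nondegenerate_iff hz hψ, Set.mem_singleton_iff] at ht
  refine ⟨φ₀ + t • ψ, ht.1, fun h => ht.2 ?_⟩
  rw [LinearMap.add_apply, LinearMap.smul_apply, smul_eq_mul] at h
  field_simp
  linear_combination h

/-- `(0, 1)` followed by the `(E_i, 0)`, matching the index order of `hatB`. -/
noncomputable def borderedBasis {m : ℕ} (E : Module.Basis (Fin m) ℂ g) :
    Module.Basis (Fin (m + 1)) ℂ (g × ℂ) :=
  (E.prod (Module.Basis.singleton Unit ℂ)).reindex
    ((finSuccEquiv m).trans (Equiv.optionEquivSumPUnit.{0} _)).symm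

theorem hatB_eq_toMatrix {m : ℕ} (E : Module.Basis (Fin m) ℂ g) (φ : Module.Dual ℂ g) :
    hatB (⇑E) φ = LinearMap.BilinForm.toMatrix (borderedBasis E) (borderedForm φ φ) := by
  ext i j
  cases i using Fin.cases <;> cases j using Fin.cases <;>
    simp [hatB, borderedBasis, LinearMap.BilinForm.toMatrix_apply]

end Bordered

/-- A finite-dimensional complex Lie algebra of index one with
nontrivial center has odd dimension and is contact; moreover there is a regular
contact form which is nonzero on some nonzero central element. -/
theorem stmt0 (g : Type) [LieRing g] [LieAlgebra ℂ g] [Module.Finite ℂ g]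
    (hind : lieIndex g = 1)
    (hZ : ∃ z : g, z ≠ 0 ∧ ∀ y : g, ⁅z, y⁆ = 0) :
    Odd (Module.finrank ℂ g) ∧ IsContact g ∧
      ∃ (k : ℕ) (E : Module.Basis (Fin (2 * k + 1)) ℂ g) (φ : Module.Dual ℂ g),
        (hatB (⇑E) φ).det ≠ 0 ∧ Module.finrank ℂ (kerB φ) = 1 ∧
          ∃ z : g, z ≠ 0 ∧ (∀ y : g, ⁅z, y⁆ = 0) ∧ φ z ≠ 0 := by
  obtain ⟨z, hz0, hz⟩ := hZ
  obtain ⟨φ₀, hφ₀⟩ := exists_finrank_kerB_eq_one hind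
  obtain ⟨φ, hker, hφz⟩ :=
    exists_kerB_eq_span_apply_ne_zero hz0 hz (kerB_eq_span_of_finrank_eq_one hz0 hz hφ₀)
  have hnd : (borderedForm φ φ).Nondegenerate := (borderedForm_nondegenerate_iff hz hφz).mpr hker
  obtain ⟨k, hk⟩ := odd_finrank_of_borderedForm_nondegenerate hnd
  let E := (Module.finBasis ℂ g).reindex (finCongr hk)
  have hdet : (hatB (⇑E) φ).det ≠ 0 := by
    rw [hatB_eq_toMatrix]
    exact (LinearMap.BilinForm.nondegenerate_iff_det_ne_zero _).mp hnd
  have hrank : Module.finrank ℂ (kerB φ) = 1 := by rw [hker, finrank_span_singleton hz0]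
  exact ⟨⟨k, hk⟩, ⟨φ, k, E, hdet⟩, k, E, φ, hdet, hrank, z, hz0, hz, hφz⟩
end

section
/- Let P be a finite poset. If the Hasse diagram of the induced subposet P_{Ext(P)} contains a cycle (i.e., is not a forest as a simple graph), then the type-A Lie poset algebra g_A(P) is not contact. -/
open Matrix

attribute [local instance 100] LieRing.ofAssociativeRing

/-! If `φ` is a contact form then `B̂_φ` is nonsingular, so there is no `x ≠ 0` with
`φ x = 0` and `φ ⁅x, ·⁆ = 0`: the vector `(0, x)` would lie in its left kernel. We build such an
`x` for every `φ` from a cycle in the Hasse diagram on `Ext(P)`.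

An edge `a ≺ b` of that diagram joins a minimal `a` to a maximal `b`, so the matrix unit `E_{ab}`
is a common eigenvector: `⁅E_{ab}, Y⁆ = (Y_{bb} - Y_{aa}) E_{ab}` for all `Y ∈ g_A(P)`. If `φ`
kills some `E_{ab}` on the cycle, that unit is the required `x`. Otherwise take
`x = ∑ ±E_e / φ(E_e)` over the edges `e` of the cycle, the sign recording whether the cycle
climbs or descends along `e`. Then `φ ⁅x, Y⁆` telescopes around the cycle over the diagonal of
`Y`, and `φ x` over the indicator of non-minimality, so both vanish; `x ≠ 0` because the edges of
a cycle are distinct. -/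

theorem vecCons_repr_vecMul_hatB {g : Type*} [LieRing g] [LieAlgebra ℂ g] {m : ℕ}
    (E : Module.Basis (Fin m) ℂ g) (φ : Module.Dual ℂ g) (x : g) :
    vecCons 0 (E.repr x) ᵥ* hatB E φ = vecCons (-φ x) fun j => φ ⁅x, E j⁆ := by
  have hφ : φ x = ∑ i, E.repr x i * φ (E i) := by
    conv_lhs => rw [← E.sum_repr x]
    simp only [map_sum, map_smul, smul_eq_mul]
  have hlie : ∀ j, φ ⁅x, E j⁆ = ∑ i, E.repr x i * φ ⁅E i, E j⁆ := fun j => by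
    conv_lhs => rw [← E.sum_repr x]
    simp only [sum_lie, smul_lie, map_sum, map_smul, smul_eq_mul]
  ext j
  refine Fin.cases ?_ (fun j => ?_) j
  · simp [vecMul, dotProduct, Fin.sum_univ_succ, hatB, hφ]
  · simp [vecMul, dotProduct, Fin.sum_univ_succ, hatB, hlie]

theorem det_hatB_eq_zero_of_mem_kerB {g : Type*} [LieRing g] [LieAlgebra ℂ g] {m : ℕ}
    (E : Module.Basis (Fin m) ℂ g) {φ : Module.Dual ℂ g} {x : g} (hx : x ≠ 0) (hφx : φ x = 0)
    (hxB : x ∈ kerB φ) : (hatB E φ).det = 0 := by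
  refine Matrix.exists_vecMul_eq_zero_iff.mp ⟨vecCons 0 (E.repr x), ?_, ?_⟩
  · simpa using hx
  · rw [vecCons_repr_vecMul_hatB, hφx, neg_zero, cons_eq_zero_iff]
    exact ⟨rfl, funext fun j => hxB (E j)⟩

theorem not_isContact_of_forall_exists_mem_kerB {g : Type*} [LieRing g] [LieAlgebra ℂ g]
    (h : ∀ φ : Module.Dual ℂ g, ∃ x ≠ 0, φ x = 0 ∧ x ∈ kerB φ) : ¬ IsContact g := by
  rintro ⟨φ, k, E, hdet⟩
  obtain ⟨x, hx, hφx, hxB⟩ := h φ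
  exact hdet (det_hatB_eq_zero_of_mem_kerB E hx hφx hxB)

theorem Matrix.single_mul_sub_mul_single {ι R : Type*} [Fintype ι] [DecidableEq ι] [CommRing R]
    {a b : ι} (c : R) {Y : Matrix ι ι R} (hrow : ∀ j, j ≠ b → Y b j = 0)
    (hcol : ∀ i, i ≠ a → Y i a = 0) :
    single a b c * Y - Y * single a b c = (Y b b - Y a a) • single a b c := by
  ext i j
  by_cases hi : i = a <;> by_cases hj : j = b
  · subst hi hj; simp; ring
  · subst hi; simp [hj, hrow j hj, single_apply_of_col_ne _ _ (Ne.symm hj)]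
  · subst hj; simp [hi, hcol i hi, single_apply_of_row_ne (Ne.symm hi)]
  · simp [hi, hj, single_apply_of_row_ne (Ne.symm hi)]

namespace FinPoset

variable {n : ℕ} (P : FinPoset n)

theorem minimal_of_mem_extSet_of_lt {i j : Fin n} (hi : i ∈ extSet P) (h : P.lt i j) :
    ∀ k, ¬ P.lt k i :=
  hi.resolve_right fun hmax => hmax j h

theorem maximal_of_mem_extSet_of_lt {i j : Fin n} (hj : j ∈ extSet P) (h : P.lt i j) :
    ∀ k, ¬ P.lt j k :=
  hj.resolve_left fun hmin => hmin i h

end FinPoset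

section LiePosetAlgebra

variable {n : ℕ} {P : FinPoset n}

theorem single_mem_gA {a b : Fin n} (h : P.lt a b) (c : ℂ) : single a b c ∈ gA P :=
  ⟨trace_single_eq_of_ne _ _ _ h.2, fun _ _ hij =>
    single_apply_of_ne _ _ _ _ _ fun ⟨hai, hbj⟩ => hij (hai ▸ hbj ▸ h.1)⟩

theorem lie_single_of_minimal_of_maximal {a b : Fin n} (ha : ∀ k, ¬ P.lt k a)
    (hb : ∀ k, ¬ P.lt b k) (c : ℂ) {Y : Matrix (Fin n) (Fin n) ℂ} (hY : Y ∈ gA P) :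
    ⁅single a b c, Y⁆ = (Y b b - Y a a) • single a b c :=
  (Ring.lie_def _ _).trans <| single_mul_sub_mul_single c
    (fun j hj => hY.2 b j fun hle => hb j ⟨hle, Ne.symm hj⟩)
    (fun i hi => hY.2 i a fun hle => ha i ⟨hle, hi⟩)

end LiePosetAlgebra

theorem SimpleGraph.Walk.sum_darts_sub {V M : Type*} [AddCommGroup M] {G : SimpleGraph V}
    (f : V → M) {u v : V} (p : G.Walk u v) :
    (p.darts.map fun d => f d.snd - f d.fst).sum = f v - f u := by
  induction p with
  | nil => simp
  | cons h q ih => simp [ih]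

section HasseDart

variable {n : ℕ} {P : FinPoset n} {S : Set (Fin n)}

theorem hasseOn_adj_lt_or_lt {u v : S} (h : (hasseOn P S).Adj u v) : P.lt u v ∨ P.lt v u :=
  ((SimpleGraph.fromRel_adj _ _ _).mp h).2.imp And.left And.left

open Classical in
noncomputable def dartBot (d : (hasseOn P S).Dart) : S :=
  if P.lt d.fst d.snd then d.fst else d.snd

open Classical in
noncomputable def dartTop (d : (hasseOn P S).Dart) : S :=
  if P.lt d.fst d.snd then d.snd else d.fst

open Classical in
noncomputable def dartSign (d : (hasseOn P S).Dart) : ℂ :=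
  if P.lt d.fst d.snd then 1 else -1

theorem lt_dartBot_dartTop (d : (hasseOn P S).Dart) : P.lt (dartBot d) (dartTop d) := by
  unfold dartBot dartTop
  split_ifs with h
  · exact h
  · exact (hasseOn_adj_lt_or_lt d.adj).resolve_left h

theorem dart_edge_eq_mk_dartBot_dartTop (d : (hasseOn P S).Dart) :
    d.edge = s(dartBot d, dartTop d) := by
  unfold dartBot dartTop
  split_ifs
  · rfl
  · exact Sym2.eq_swap

theorem dartSign_ne_zero (d : (hasseOn P S).Dart) : dartSign d ≠ 0 := by
  unfold dartSign
  split_ifs <;> norm_num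

theorem dartSign_mul_sub (d : (hasseOn P S).Dart) (f : S → ℂ) :
    dartSign d * (f (dartTop d) - f (dartBot d)) = f d.snd - f d.fst := by
  unfold dartSign dartBot dartTop
  split_ifs <;> ring

theorem SimpleGraph.Walk.IsCycle.sum_dartSign_mul_sub {u : S} {c : (hasseOn P S).Walk u u}
    (hc : c.IsCycle) (f : S → ℂ) :
    ∑ d ∈ c.darts.toFinset, dartSign d * (f (dartTop d) - f (dartBot d)) = 0 := by
  rw [List.sum_toFinset _ (hc.edges_nodup.of_map _)]
  simp only [dartSign_mul_sub, c.sum_darts_sub, sub_self]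

end HasseDart

section ExtremalCycle

variable {n : ℕ} {P : FinPoset n}

theorem dartBot_minimal (d : (hasseOn P (extSet P)).Dart) : ∀ k, ¬ P.lt k (dartBot d) :=
  P.minimal_of_mem_extSet_of_lt (dartBot d).2 (lt_dartBot_dartTop d)

theorem dartTop_maximal (d : (hasseOn P (extSet P)).Dart) : ∀ k, ¬ P.lt (dartTop d) k :=
  P.maximal_of_mem_extSet_of_lt (dartTop d).2 (lt_dartBot_dartTop d)

noncomputable def dartUnit (d : (hasseOn P (extSet P)).Dart) : gA P :=
  ⟨single (dartBot d) (dartTop d) 1, single_mem_gA (lt_dartBot_dartTop d) 1⟩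

theorem coe_dartUnit (d : (hasseOn P (extSet P)).Dart) :
    (dartUnit d : Matrix (Fin n) (Fin n) ℂ) = single (dartBot d : Fin n) (dartTop d : Fin n) 1 :=
  rfl

theorem apply_lie_dartUnit (φ : Module.Dual ℂ (gA P)) (d : (hasseOn P (extSet P)).Dart)
    (y : gA P) :
    φ ⁅dartUnit d, y⁆ =
      ((y : Matrix (Fin n) (Fin n) ℂ).diag (dartTop d) -
        (y : Matrix (Fin n) (Fin n) ℂ).diag (dartBot d)) * φ (dartUnit d) := by
  have : ⁅dartUnit d, y⁆ = ((y : Matrix (Fin n) (Fin n) ℂ).diag (dartTop d) -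
      (y : Matrix (Fin n) (Fin n) ℂ).diag (dartBot d)) • dartUnit d := Subtype.ext <|
    lie_single_of_minimal_of_maximal (dartBot_minimal d) (dartTop_maximal d) 1 y.2
  rw [this, map_smul, smul_eq_mul]

theorem sum_smul_dartUnit_ne_zero {s : Finset (hasseOn P (extSet P)).Dart}
    (hs : Set.InjOn SimpleGraph.Dart.edge (s : Set (hasseOn P (extSet P)).Dart))
    {w : (hasseOn P (extSet P)).Dart → ℂ}
    {d₀ : (hasseOn P (extSet P)).Dart} (hd₀ : d₀ ∈ s) (hw : w d₀ ≠ 0) :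
    ∑ d ∈ s, w d • dartUnit d ≠ 0 := by
  have hentry : ((∑ d ∈ s, w d • dartUnit d : gA P) : Matrix (Fin n) (Fin n) ℂ)
      (dartBot d₀) (dartTop d₀) = w d₀ := by
    simp only [AddSubmonoidClass.coe_finsetSum, SetLike.val_smul, Matrix.sum_apply,
      Matrix.smul_apply, coe_dartUnit, smul_eq_mul]
    rw [Finset.sum_eq_single_of_mem d₀ hd₀ fun d hd hne => ?_, single_apply_same, mul_one]
    refine mul_eq_zero_of_right _ (single_apply_of_ne _ _ _ _ _ fun ⟨hbot, htop⟩ => hne ?_)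
    refine hs hd hd₀ ?_
    rw [dart_edge_eq_mk_dartBot_dartTop, dart_edge_eq_mk_dartBot_dartTop, Subtype.ext hbot,
      Subtype.ext htop]
  intro h
  rw [h] at hentry
  exact hw hentry.symm

theorem dartUnit_mem_kerB {φ : Module.Dual ℂ (gA P)} {d : (hasseOn P (extSet P)).Dart}
    (hd : φ (dartUnit d) = 0) : dartUnit d ∈ kerB φ := fun y => by
  rw [apply_lie_dartUnit, hd, mul_zero]

theorem dartUnit_ne_zero (d : (hasseOn P (extSet P)).Dart) : dartUnit d ≠ 0 := by
  simpa using sum_smul_dartUnit_ne_zero (s := {d}) (w := 1) (by simp)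
    (Finset.mem_singleton_self d) one_ne_zero

open Classical in
noncomputable def isNonminimal (P : FinPoset n) (i : Fin n) : ℂ :=
  if ∃ k, P.lt k i then 1 else 0

theorem isNonminimal_dartTop_sub_dartBot (d : (hasseOn P (extSet P)).Dart) :
    isNonminimal P (dartTop d) - isNonminimal P (dartBot d) = 1 := by
  rw [isNonminimal, isNonminimal, if_pos ⟨_, lt_dartBot_dartTop d⟩,
    if_neg fun ⟨k, hk⟩ => dartBot_minimal d k hk, sub_zero]

theorem exists_ne_zero_mem_kerB_of_isCycle {u : extSet P}
    {c : (hasseOn P (extSet P)).Walk u u} (hc : c.IsCycle) (φ : Module.Dual ℂ (gA P)) :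
    ∃ x ≠ 0, φ x = 0 ∧ x ∈ kerB φ := by
  by_cases hzero : ∃ d ∈ c.darts, φ (dartUnit d) = 0
  · obtain ⟨d, -, hd⟩ := hzero
    exact ⟨dartUnit d, dartUnit_ne_zero d, hd, dartUnit_mem_kerB hd⟩
  push Not at hzero
  obtain ⟨d₀, hd₀⟩ :=
    List.exists_mem_of_ne_nil _ (mt SimpleGraph.Walk.darts_eq_nil.mp hc.not_nil)
  refine ⟨∑ d ∈ c.darts.toFinset, (dartSign d / φ (dartUnit d)) • dartUnit d, ?_, ?_, fun y => ?_⟩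
  · exact sum_smul_dartUnit_ne_zero (w := fun d => dartSign d / φ (dartUnit d))
      (fun d hd d' hd' => List.inj_on_of_nodup_map hc.edges_nodup (List.mem_toFinset.mp hd)
        (List.mem_toFinset.mp hd'))
      (List.mem_toFinset.mpr hd₀) (div_ne_zero (dartSign_ne_zero d₀) (hzero d₀ hd₀))
  · calc φ (∑ d ∈ c.darts.toFinset, (dartSign d / φ (dartUnit d)) • dartUnit d)
        = ∑ d ∈ c.darts.toFinset, dartSign d *
            (isNonminimal P (dartTop d) - isNonminimal P (dartBot d)) := by
          rw [map_sum]
          refine Finset.sum_congr rfl fun d hd => ?_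
          rw [map_smul, smul_eq_mul, div_mul_cancel₀ _ (hzero d (List.mem_toFinset.mp hd)),
            isNonminimal_dartTop_sub_dartBot, mul_one]
      _ = 0 := hc.sum_dartSign_mul_sub fun v => isNonminimal P v
  · calc φ ⁅∑ d ∈ c.darts.toFinset, (dartSign d / φ (dartUnit d)) • dartUnit d, y⁆
        = ∑ d ∈ c.darts.toFinset, dartSign d *
            ((y : Matrix (Fin n) (Fin n) ℂ).diag (dartTop d) -
              (y : Matrix (Fin n) (Fin n) ℂ).diag (dartBot d)) := by
          rw [sum_lie, map_sum]
          refine Finset.sum_congr rfl fun d hd => ?_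
          rw [smul_lie, map_smul, smul_eq_mul, apply_lie_dartUnit]
          field_simp [hzero d (List.mem_toFinset.mp hd)]
      _ = 0 := hc.sum_dartSign_mul_sub fun v => (y : Matrix (Fin n) (Fin n) ℂ).diag v

end ExtremalCycle

/-- if the Hasse diagram of the subposet induced on the extremal
elements of `P` contains a cycle, then `g_A(P)` is not contact. -/
theorem stmt1 {n : ℕ} (P : FinPoset n)
    (hcyc : ¬ (hasseOn P (extSet P)).IsAcyclic) :
    ¬ IsContact ↥(gA P) := by
  obtain ⟨u, c, hc⟩ : ∃ u, ∃ c : (hasseOn P (extSet P)).Walk u u, c.IsCycle := by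
    simpa [SimpleGraph.IsAcyclic] using hcyc
  exact not_isContact_of_forall_exists_mem_kerB (exists_ne_zero_mem_kerB_of_isCycle hc)
end

section
/- Let P be a disconnected finite poset of height at most two. Then g_A(P) is contact if and only if P is the disjoint sum of two posets P_1 and P_2 such that g_A(P_1) and g_A(P_2) are both Frobenius (index zero). -/
open Matrix

attribute [local instance 100] LieRing.ofAssociativeRing

/-!
If `P = P₁ + P₂` with both parts nonempty, block-diagonal matrices give
`g_A(P) ≅ g_A(P₁) × g_A(P₂) × ℂ`, the last factor being central. For `g × ℂ` with `ℂ` central,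
a form `φ` makes `\widehat{B}_φ` nonsingular exactly when `φ` is nonzero on the centre and its
restriction to `g` has trivial Kirillov kernel, so `g × ℂ` is contact iff `g` is Frobenius (the
odd dimension comes from the even dimension of a Frobenius algebra). A product is Frobenius iff
both factors are, since the Kirillov kernel of `φ₁ ⊕ φ₂` is the product of the kernels. Finally,
a disconnected poset is the disjoint sum of a connected component and its complement.
-/
open Module

theorem even_finrank_of_isAlt_of_separatingLeft {K V : Type*} [Field K] [CharZero K]
    [AddCommGroup V] [Module K V] [FiniteDimensional K V] {B : LinearMap.BilinForm K V}
    (hB : B.IsAlt) (hsep : B.SeparatingLeft) : Even (finrank K V) := by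
  by_contra hodd
  let b := finBasis K V
  set M := LinearMap.BilinForm.toMatrix b B
  have hdet : M.det ≠ 0 :=
    separatingLeft_iff_det_ne_zero.mp ((LinearMap.BilinForm.separatingLeft_toMatrix_iff b).mpr hsep)
  have hskew : Mᵀ = -M := by
    ext i j
    simp [M, LinearMap.BilinForm.toMatrix_apply, hB.neg_eq]
  have hself : M.det = -M.det := by
    calc M.det = Mᵀ.det := (det_transpose M).symm
      _ = -M.det := by
        rw [hskew, det_neg, Fintype.card_fin, (Nat.not_even_iff_odd.mp hodd).neg_one_pow,
          neg_one_mul]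
  exact hdet (self_eq_neg.mp hself)

section Kirillov

variable {g : Type*} [LieRing g] [LieAlgebra ℂ g]

theorem mem_kerB {φ : Dual ℂ g} {x : g} : x ∈ kerB φ ↔ ∀ y, φ ⁅x, y⁆ = 0 := Iff.rfl

theorem even_finrank_of_kerB_eq_bot [FiniteDimensional ℂ g] {φ : Dual ℂ g} (hφ : kerB φ = ⊥) :
    Even (finrank ℂ g) := by
  let B : LinearMap.BilinForm ℂ g := (LieAlgebra.ad ℂ g : g →ₗ[ℂ] g →ₗ[ℂ] g).compr₂ φ
  refine even_finrank_of_isAlt_of_separatingLeft (B := B) (fun x => by simp [B]) fun x hx => ?_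
  rw [← Submodule.mem_bot ℂ, ← hφ]
  exact mem_kerB.mpr (by simpa [B] using hx)

theorem lieIndex_eq_zero_iff [FiniteDimensional ℂ g] :
    lieIndex g = 0 ↔ ∃ φ : Dual ℂ g, kerB φ = ⊥ := by
  have hne : {d | ∃ φ : Dual ℂ g, finrank ℂ (kerB φ) = d}.Nonempty := ⟨_, 0, rfl⟩
  simp only [lieIndex, Nat.sInf_eq_zero, hne.ne_empty, or_false, Set.mem_ofPred_eq,
    Submodule.finrank_eq_zero]

theorem kerB_coprod {g₁ g₂ : Type*} [LieRing g₁] [LieAlgebra ℂ g₁] [LieRing g₂] [LieAlgebra ℂ g₂]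
    (φ₁ : Dual ℂ g₁) (φ₂ : Dual ℂ g₂) : kerB (φ₁.coprod φ₂) = (kerB φ₁).prod (kerB φ₂) := by
  ext ⟨x₁, x₂⟩
  simp only [mem_kerB, Submodule.mem_prod, Prod.forall, LieAlgebra.Prod.bracket_apply,
    LinearMap.coprod_apply]
  constructor
  · intro h
    exact ⟨fun y₁ => by simpa using h y₁ 0, fun y₂ => by simpa using h 0 y₂⟩
  · rintro ⟨h₁, h₂⟩ y₁ y₂
    rw [h₁, h₂, add_zero]

theorem lieIndex_prod_eq_zero_iff {g₁ g₂ : Type*} [LieRing g₁] [LieAlgebra ℂ g₁] [LieRing g₂]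
    [LieAlgebra ℂ g₂] [FiniteDimensional ℂ g₁] [FiniteDimensional ℂ g₂] :
    lieIndex (g₁ × g₂) = 0 ↔ lieIndex g₁ = 0 ∧ lieIndex g₂ = 0 := by
  simp only [lieIndex_eq_zero_iff]
  constructor
  · rintro ⟨φ, hφ⟩
    rw [← LinearMap.coprod_comp_inl_inr φ, kerB_coprod, Submodule.prod_eq_bot_iff] at hφ
    exact ⟨⟨_, hφ.1⟩, ⟨_, hφ.2⟩⟩
  · rintro ⟨⟨φ₁, h₁⟩, ⟨φ₂, h₂⟩⟩
    exact ⟨φ₁.coprod φ₂, by rw [kerB_coprod, h₁, h₂, Submodule.prod_bot]⟩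

end Kirillov

section Contact

variable {g : Type*} [LieRing g] [LieAlgebra ℂ g]

theorem hatB_mulVec_cons {m : ℕ} (E : Fin m → g) (φ : Dual ℂ g) (s : ℂ) (c : Fin m → ℂ) :
    hatB E φ *ᵥ vecCons s c =
      vecCons (φ (∑ j, c j • E j)) fun i => φ ⁅E i, ∑ j, c j • E j⁆ - s * φ (E i) := by
  ext i
  refine Fin.cases ?_ (fun i => ?_) i <;>
    simp [hatB, mulVec, dotProduct, Fin.sum_univ_succ, map_sum, lie_sum, mul_comm]
  ring

theorem hatB_mulVec_cons_eq_zero_iff {m : ℕ} (E : Basis (Fin m) ℂ g) (φ : Dual ℂ g) (s : ℂ)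
    (x : g) : hatB E φ *ᵥ vecCons s (E.equivFun x) = 0 ↔
      φ x = 0 ∧ ∀ y, φ ⁅y, x⁆ = s * φ y := by
  rw [hatB_mulVec_cons, E.sum_equivFun, cons_eq_zero_iff, funext_iff]
  simp only [Pi.zero_apply, sub_eq_zero]
  refine and_congr_right fun _ => ⟨fun h y => ?_, fun h i => h (E i)⟩
  have hext : φ ∘ₗ (LieAlgebra.ad ℂ g : g →ₗ[ℂ] g →ₗ[ℂ] g).flip x = s • φ := E.ext fun i => by
    simpa using h i
  simpa using LinearMap.congr_fun hext y

theorem det_hatB_ne_zero_iff {m : ℕ} (E : Basis (Fin m) ℂ g) (φ : Dual ℂ g) :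
    (hatB E φ).det ≠ 0 ↔
      ∀ (s : ℂ) (x : g), φ x = 0 → (∀ y, φ ⁅y, x⁆ = s * φ y) → s = 0 ∧ x = 0 := by
  constructor
  · intro hdet s x hφx hx
    by_contra hne
    refine hdet (exists_mulVec_eq_zero_iff.mp ⟨vecCons s (E.equivFun x), ?_,
      (hatB_mulVec_cons_eq_zero_iff E φ s x).mpr ⟨hφx, hx⟩⟩)
    rwa [Ne, cons_eq_zero_iff, LinearEquiv.map_eq_zero_iff]
  · intro h hdet
    obtain ⟨v, hv, hMv⟩ := exists_mulVec_eq_zero_iff.mpr hdet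
    obtain ⟨s, x, rfl⟩ : ∃ s x, v = vecCons s (E.equivFun x) :=
      ⟨vecHead v, E.equivFun.symm (vecTail v), by rw [LinearEquiv.apply_symm_apply, cons_head_tail]⟩
    obtain ⟨hφx, hx⟩ := (hatB_mulVec_cons_eq_zero_iff E φ s x).mp hMv
    obtain ⟨rfl, rfl⟩ := h s x hφx hx
    simp at hv

theorem isContact_iff [FiniteDimensional ℂ g] :
    IsContact g ↔ Odd (finrank ℂ g) ∧ ∃ φ : Dual ℂ g,
      ∀ (s : ℂ) (x : g), φ x = 0 → (∀ y, φ ⁅y, x⁆ = s * φ y) → s = 0 ∧ x = 0 := by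
  constructor
  · rintro ⟨φ, k, E, hdet⟩
    exact ⟨⟨k, by rw [finrank_eq_card_basis E, Fintype.card_fin]⟩, φ,
      (det_hatB_ne_zero_iff E φ).mp hdet⟩
  · rintro ⟨⟨k, hk⟩, φ, hφ⟩
    exact ⟨φ, k, (finBasis ℂ g).reindex (finCongr hk), (det_hatB_ne_zero_iff _ φ).mpr hφ⟩

theorem hatB_comp_lieEquiv {g' : Type*} [LieRing g'] [LieAlgebra ℂ g'] (e : g ≃ₗ⁅ℂ⁆ g')
    {m : ℕ} (E : Fin m → g) (φ : Dual ℂ g) :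
    hatB (e ∘ E) (φ ∘ₗ (e.symm.toLinearEquiv : g' →ₗ[ℂ] g)) = hatB E φ := by
  ext i j
  refine Fin.cases ?_ (fun i => ?_) i <;> refine Fin.cases ?_ (fun j => ?_) j <;>
    simp [hatB, ← LieEquiv.map_lie]

theorem IsContact.of_lieEquiv {g' : Type*} [LieRing g'] [LieAlgebra ℂ g'] (e : g ≃ₗ⁅ℂ⁆ g')
    (h : IsContact g) : IsContact g' := by
  obtain ⟨φ, k, E, hdet⟩ := h
  refine ⟨φ ∘ₗ (e.symm.toLinearEquiv : g' →ₗ[ℂ] g), k, E.map e.toLinearEquiv, ?_⟩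
  have hE : ⇑(E.map e.toLinearEquiv) = e ∘ E := by ext; simp
  rwa [hE, hatB_comp_lieEquiv]

theorem LieEquiv.isContact_iff {g' : Type*} [LieRing g'] [LieAlgebra ℂ g'] (e : g ≃ₗ⁅ℂ⁆ g') :
    IsContact g ↔ IsContact g' :=
  ⟨.of_lieEquiv e, .of_lieEquiv e.symm⟩

theorem Complex.lie_eq_zero (a b : ℂ) : ⁅a, b⁆ = 0 := (Commute.all a b).lie_eq

theorem isContact_prod_complex_iff [FiniteDimensional ℂ g] :
    IsContact (g × ℂ) ↔ lieIndex g = 0 := by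
  rw [isContact_iff, lieIndex_eq_zero_iff]
  constructor
  · rintro ⟨-, φ, hφ⟩
    have hz : φ (0, 1) ≠ 0 := fun h0 => by
      simpa using (hφ 0 (0, 1) h0 fun y => by simp [Complex.lie_eq_zero, Prod.mk_zero_zero]).2
    refine ⟨φ ∘ₗ LinearMap.inl ℂ g ℂ, (Submodule.eq_bot_iff _).mpr fun a ha => ?_⟩
    have hsplit : ∀ t : ℂ, φ (a, t) = φ (a, 0) + t * φ (0, 1) := fun t => by
      rw [← smul_eq_mul, ← map_smul, ← map_add]; simp
    -- shift `(a, 0)` along the centre into `ker φ`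
    have hker := hφ 0 (a, -φ (a, 0) / φ (0, 1)) (by rw [hsplit]; field_simp; ring) fun y => by
      have := mem_kerB.mp ha y.1
      rw [← neg_eq_zero, ← map_neg, ← lie_skew] at this
      simpa [Complex.lie_eq_zero] using this
    exact congrArg Prod.fst hker.2
  · rintro ⟨ψ, hψ⟩
    refine ⟨?_, ψ.coprod LinearMap.id, ?_⟩
    · rw [finrank_prod, finrank_self]
      exact (even_finrank_of_kerB_eq_bot hψ).add_one
    · rintro s ⟨a, t⟩ hx hy
      have hs : s = 0 := by simpa [Complex.lie_eq_zero] using (hy (0, 1)).symm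
      subst hs
      have ha : a = 0 := by
        rw [← Submodule.mem_bot ℂ, ← hψ]
        refine mem_kerB.mpr fun b => ?_
        have := hy (b, 0)
        rw [← lie_skew, map_neg, neg_eq_zero]
        simpa [Complex.lie_eq_zero] using this
      subst ha
      simpa using hx

end Contact

namespace FinPoset

variable {n m m₁ m₂ : ℕ}

theorem ne_of_not_le (P : FinPoset n) {i j : Fin n} (h : ¬P.le i j) : i ≠ j :=
  fun hij => h (hij ▸ P.le_refl i)

theorem lt_compat (P : FinPoset n) {i j : Fin n} (h : P.lt i j) : i < j :=
  lt_of_le_of_ne (P.le_compat i j h.1) h.2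

def comap (P : FinPoset n) (f : Fin m ↪o Fin n) : FinPoset m where
  le a b := P.le (f a) (f b)
  le_refl a := P.le_refl (f a)
  le_antisymm _ _ hab hba := f.injective (P.le_antisymm _ _ hab hba)
  le_trans a b c := P.le_trans (f a) (f b) (f c)
  le_compat _ _ h := f.le_iff_le.mp (P.le_compat _ _ h)

def IsDisjointSum (P : FinPoset n) (P₁ : FinPoset m₁) (P₂ : FinPoset m₂)
    (e : Fin n ≃ Fin m₁ ⊕ Fin m₂) : Prop :=
  ∀ i j, P.le i j ↔ Sum.LiftRel P₁.le P₂.le (e i) (e j)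

variable {P : FinPoset n} {P₁ : FinPoset m₁} {P₂ : FinPoset m₂} {e : Fin n ≃ Fin m₁ ⊕ Fin m₂}

theorem isDisjointSum_iff : P.IsDisjointSum P₁ P₂ e ↔
    ∀ i j : Fin n, P.le i j ↔
      ((∃ a b, e i = Sum.inl a ∧ e j = Sum.inl b ∧ P₁.le a b) ∨
        (∃ a b, e i = Sum.inr a ∧ e j = Sum.inr b ∧ P₂.le a b)) := by
  refine forall₂_congr fun i j => iff_congr Iff.rfl ?_
  cases e i <;> cases e j <;> simp

theorem IsDisjointSum.le_symm_iff (hP : P.IsDisjointSum P₁ P₂ e) (x y : Fin m₁ ⊕ Fin m₂) :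
    P.le (e.symm x) (e.symm y) ↔ Sum.LiftRel P₁.le P₂.le x y := by
  simpa using hP (e.symm x) (e.symm y)

theorem isDisjointSum_comap (f₁ : Fin m₁ ↪o Fin n) (f₂ : Fin m₂ ↪o Fin n)
    (hf : Function.Bijective (Sum.elim f₁ f₂))
    (hsep : ∀ a b, ¬P.le (f₁ a) (f₂ b) ∧ ¬P.le (f₂ b) (f₁ a)) :
    P.IsDisjointSum (P.comap f₁) (P.comap f₂) (Equiv.ofBijective _ hf).symm := by
  intro i j
  obtain ⟨x, rfl⟩ := hf.2 i
  obtain ⟨y, rfl⟩ := hf.2 j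
  rw [Equiv.ofBijective_symm_apply_apply, Equiv.ofBijective_symm_apply_apply]
  cases x <;> cases y <;> simp [comap, hsep]

theorem exists_isDisjointSum_of_mem_iff_of_le (P : FinPoset n) (S : Finset (Fin n))
    (hS : ∀ i j, P.le i j → (i ∈ S ↔ j ∈ S)) :
    ∃ (P₁ : FinPoset S.card) (P₂ : FinPoset Sᶜ.card) (e : Fin n ≃ Fin S.card ⊕ Fin Sᶜ.card),
      P.IsDisjointSum P₁ P₂ e := by
  set f₁ := S.orderEmbOfFin rfl
  set f₂ := Sᶜ.orderEmbOfFin rfl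
  have hf₁ (a) : f₁ a ∈ S := S.orderEmbOfFin_mem rfl a
  have hf₂ (b) : f₂ b ∉ S := Finset.mem_compl.mp (Sᶜ.orderEmbOfFin_mem rfl b)
  have hf : Function.Bijective (Sum.elim f₁ f₂) := by
    refine ⟨f₁.injective.sumElim f₂.injective fun a b h => hf₂ b (h ▸ hf₁ a), ?_⟩
    rw [← Set.range_eq_univ, Set.Sum.elim_range, Finset.range_orderEmbOfFin,
      Finset.range_orderEmbOfFin, Finset.coe_compl, Set.union_compl_self]
  exact ⟨_, _, _, isDisjointSum_comap f₁ f₂ hf fun a b =>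
    ⟨fun h => hf₂ b ((hS _ _ h).mp (hf₁ a)), fun h => hf₂ b ((hS _ _ h).mpr (hf₁ a))⟩⟩

theorem hasse_reachable_of_le (P : FinPoset n) {i j : Fin n} (h : P.le i j) :
    (hasse P).Reachable i j := by
  by_cases hcov : ∃ k, P.lt i k ∧ P.lt k j
  · obtain ⟨k, hik, hkj⟩ := hcov
    have := P.lt_compat hik
    have := P.lt_compat hkj
    exact (hasse_reachable_of_le P hik.1).trans (hasse_reachable_of_le P hkj.1)
  · by_cases hij : i = j
    · exact hij ▸ .refl i
    · exact SimpleGraph.Adj.reachable <| (SimpleGraph.fromRel_adj _ i j).mpr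
        ⟨hij, .inl ⟨⟨h, hij⟩, fun k hk => hcov ⟨k, hk⟩⟩⟩
termination_by j.val - i.val
decreasing_by all_goals omega

theorem exists_isDisjointSum_of_not_preconnected (hdis : ¬(hasse P).Preconnected) :
    ∃ (m₁ m₂ : ℕ) (P₁ : FinPoset m₁) (P₂ : FinPoset m₂) (e : Fin n ≃ Fin m₁ ⊕ Fin m₂),
      0 < m₁ ∧ 0 < m₂ ∧ P.IsDisjointSum P₁ P₂ e := by
  classical
  obtain ⟨u, v, huv⟩ : ∃ u v, ¬(hasse P).Reachable u v := by
    simpa [SimpleGraph.Preconnected] using hdis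
  let S := Finset.univ.filter ((hasse P).Reachable u)
  obtain ⟨P₁, P₂, e, he⟩ := P.exists_isDisjointSum_of_mem_iff_of_le S fun i j hij => by
    simpa [S] using ⟨fun hi => hi.trans (hasse_reachable_of_le P hij),
      fun hj => hj.trans (hasse_reachable_of_le P hij).symm⟩
  exact ⟨_, _, P₁, P₂, e, Finset.card_pos.mpr ⟨u, by simp [S]⟩,
    Finset.card_pos.mpr ⟨v, by simpa [S] using huv⟩, he⟩

end FinPoset

theorem lie_add_smul_one {R A : Type*} [CommRing R] [Ring A] [Algebra R A] (a b : A) (c d : R) :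
    ⁅a + c • (1 : A), b + d • (1 : A)⁆ = ⁅a, b⁆ := by
  simp only [Ring.lie_def, add_mul, mul_add, smul_mul_assoc, mul_smul_comm, one_mul, mul_one]
  module

section BlockMatrix

variable {n m₁ m₂ : ℕ} (e : Fin n ≃ Fin m₁ ⊕ Fin m₂)

def diagBlocks (A : Matrix (Fin m₁) (Fin m₁) ℂ) (D : Matrix (Fin m₂) (Fin m₂) ℂ) :
    Matrix (Fin n) (Fin n) ℂ :=
  (fromBlocks A 0 0 D).submatrix e e

theorem diagBlocks_add (A A' : Matrix (Fin m₁) (Fin m₁) ℂ) (D D' : Matrix (Fin m₂) (Fin m₂) ℂ) :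
    diagBlocks e (A + A') (D + D') = diagBlocks e A D + diagBlocks e A' D' := by
  ext i j
  simp only [diagBlocks, submatrix_apply, Matrix.add_apply]
  cases e i <;> cases e j <;> simp

theorem diagBlocks_smul (c : ℂ) (A : Matrix (Fin m₁) (Fin m₁) ℂ) (D : Matrix (Fin m₂) (Fin m₂) ℂ) :
    diagBlocks e (c • A) (c • D) = c • diagBlocks e A D := by
  ext i j
  simp only [diagBlocks, submatrix_apply, Matrix.smul_apply]
  cases e i <;> cases e j <;> simp

theorem diagBlocks_lie (A A' : Matrix (Fin m₁) (Fin m₁) ℂ) (D D' : Matrix (Fin m₂) (Fin m₂) ℂ) :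
    ⁅diagBlocks e A D, diagBlocks e A' D'⁆ = diagBlocks e ⁅A, A'⁆ ⁅D, D'⁆ := by
  ext i j
  simp only [diagBlocks, Ring.lie_def, submatrix_mul_equiv, fromBlocks_multiply, Matrix.sub_apply,
    submatrix_apply]
  cases e i <;> cases e j <;> simp

theorem diagBlocks_eq_zero_iff (A : Matrix (Fin m₁) (Fin m₁) ℂ) (D : Matrix (Fin m₂) (Fin m₂) ℂ) :
    diagBlocks e A D = 0 ↔ A = 0 ∧ D = 0 := by
  constructor
  · intro h
    refine ⟨?_, ?_⟩ <;> ext a b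
    · simpa [diagBlocks] using congrFun₂ h (e.symm (.inl a)) (e.symm (.inl b))
    · simpa [diagBlocks] using congrFun₂ h (e.symm (.inr a)) (e.symm (.inr b))
  · rintro ⟨rfl, rfl⟩
    simp [diagBlocks]

theorem trace_diagBlocks (A : Matrix (Fin m₁) (Fin m₁) ℂ) (D : Matrix (Fin m₂) (Fin m₂) ℂ) :
    trace (diagBlocks e A D) = trace A + trace D := by
  simp only [trace, diag, diagBlocks, submatrix_apply]
  rw [e.sum_comp (fun x => fromBlocks A 0 0 D x x), Fintype.sum_sum_type]
  simp

variable {P : FinPoset n} {P₁ : FinPoset m₁} {P₂ : FinPoset m₂} {e}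

theorem diagBlocks_mem_gA (hP : P.IsDisjointSum P₁ P₂ e) {A : Matrix (Fin m₁) (Fin m₁) ℂ}
    {D : Matrix (Fin m₂) (Fin m₂) ℂ} (htr : trace A + trace D = 0)
    (hA : ∀ a b, ¬P₁.le a b → A a b = 0) (hD : ∀ a b, ¬P₂.le a b → D a b = 0) :
    diagBlocks e A D ∈ gA P := by
  refine ⟨by rwa [trace_diagBlocks], fun i j hij => ?_⟩
  rw [hP] at hij
  change fromBlocks A 0 0 D (e i) (e j) = 0
  generalize e i = x, e j = y at hij ⊢
  rcases x with a | a <;> rcases y with b | b <;> simp at hij ⊢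
  exacts [hA a b hij, hD a b hij]

theorem exists_eq_diagBlocks (hP : P.IsDisjointSum P₁ P₂ e) {N : Matrix (Fin n) (Fin n) ℂ}
    (hN : N ∈ gA P) : ∃ A D, (∀ a b, ¬P₁.le a b → A a b = 0) ∧
      (∀ a b, ¬P₂.le a b → D a b = 0) ∧ N = diagBlocks e A D := by
  set M := N.submatrix e.symm e.symm
  have hM (x y) (h : ¬Sum.LiftRel P₁.le P₂.le x y) : M x y = 0 :=
    hN.2 _ _ (by rwa [hP.le_symm_iff])
  have h₁₂ : M.toBlocks₁₂ = 0 := by ext a b; exact hM _ _ (by simp)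
  have h₂₁ : M.toBlocks₂₁ = 0 := by ext a b; exact hM _ _ (by simp)
  refine ⟨M.toBlocks₁₁, M.toBlocks₂₂, fun a b h => hM _ _ (by simpa using h),
    fun a b h => hM _ _ (by simpa using h), ?_⟩
  rw [diagBlocks, ← h₁₂, ← h₂₁, fromBlocks_toBlocks]
  simp [M]

end BlockMatrix

theorem mem_gA_iff {n : ℕ} {P : FinPoset n} {M : Matrix (Fin n) (Fin n) ℂ} :
    M ∈ gA P ↔ trace M = 0 ∧ ∀ i j, ¬P.le i j → M i j = 0 := Iff.rfl

theorem trace_add_smul_one {m : ℕ} (A : Matrix (Fin m) (Fin m) ℂ) (c : ℂ) :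
    trace (A + c • 1) = trace A + c * m := by
  simp [trace_add, trace_smul]

theorem add_smul_one_apply_of_not_le {m : ℕ} {Q : FinPoset m} {A : Matrix (Fin m) (Fin m) ℂ}
    (hA : ∀ a b, ¬Q.le a b → A a b = 0) (c : ℂ) {a b : Fin m} (h : ¬Q.le a b) :
    (A + c • 1) a b = 0 := by
  simp [hA a b h, one_apply_ne (Q.ne_of_not_le h)]

section DisjointSum

variable {n m₁ m₂ : ℕ} {P : FinPoset n} {P₁ : FinPoset m₁} {P₂ : FinPoset m₂}
  {e : Fin n ≃ Fin m₁ ⊕ Fin m₂}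

/-- The scalar factor goes to `diag(m₂ I, -m₁ I)`, which has trace zero and commutes with every
block-diagonal matrix. -/
def gAProdLieHom (hP : P.IsDisjointSum P₁ P₂ e) : (gA P₁ × gA P₂) × ℂ →ₗ⁅ℂ⁆ gA P where
  toFun p := ⟨diagBlocks e (p.1.1 + (p.2 * m₂) • 1) (p.1.2 + (-p.2 * m₁) • 1),
    diagBlocks_mem_gA hP
      (by rw [trace_add_smul_one, trace_add_smul_one, (mem_gA_iff.mp p.1.1.2).1,
        (mem_gA_iff.mp p.1.2.2).1]; ring)
      (fun _ _ => add_smul_one_apply_of_not_le (mem_gA_iff.mp p.1.1.2).2 _)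
      (fun _ _ => add_smul_one_apply_of_not_le (mem_gA_iff.mp p.1.2.2).2 _)⟩
  map_add' p q := by
    ext1
    simp only [Prod.fst_add, Prod.snd_add, AddMemClass.coe_add]
    rw [← diagBlocks_add]
    congr 1 <;> module
  map_smul' c p := by
    ext1
    simp only [Prod.smul_fst, Prod.smul_snd, SetLike.val_smul, RingHom.id_apply]
    rw [← diagBlocks_smul]
    congr 1 <;> module
  map_lie' := by
    rintro ⟨⟨x, y⟩, t⟩ ⟨⟨x', y'⟩, t'⟩
    ext1
    simp only [LieAlgebra.Prod.bracket_apply, LieSubalgebra.coe_bracket, diagBlocks_lie,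
      lie_add_smul_one, Complex.lie_eq_zero, zero_mul, neg_zero, zero_smul, add_zero]

theorem gAProdLieHom_injective (hP : P.IsDisjointSum P₁ P₂ e) (h₁ : 0 < m₁) (h₂ : 0 < m₂) :
    Function.Injective (gAProdLieHom hP) := by
  rw [injective_iff_map_eq_zero]
  rintro ⟨⟨x, y⟩, t⟩ h
  obtain ⟨hx, hy⟩ := (diagBlocks_eq_zero_iff e _ _).mp (congrArg Subtype.val h)
  have ht : t = 0 := by
    have := congrArg trace hx
    rw [trace_add_smul_one, (mem_gA_iff.mp x.2).1, trace_zero] at this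
    simpa [h₁.ne', h₂.ne'] using this
  subst ht
  simp only [zero_mul, neg_zero, zero_smul, add_zero, ZeroMemClass.coe_eq_zero] at hx hy
  simp [hx, hy]

theorem gAProdLieHom_surjective (hP : P.IsDisjointSum P₁ P₂ e) (h₁ : 0 < m₁) (h₂ : 0 < m₂) :
    Function.Surjective (gAProdLieHom hP) := by
  rintro ⟨N, hN⟩
  obtain ⟨A, D, hA, hD, rfl⟩ := exists_eq_diagBlocks hP hN
  have htr : trace A + trace D = 0 := by rw [← trace_diagBlocks e]; exact hN.1
  obtain ⟨t, ht⟩ : ∃ t : ℂ, t * (m₁ * m₂) = trace A :=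
    ⟨_, div_mul_cancel₀ _ (by simp [h₁.ne', h₂.ne'])⟩
  refine ⟨⟨⟨⟨A + (-t * m₂) • 1, ?_⟩, ⟨D + (t * m₁) • 1, ?_⟩⟩, t⟩, ?_⟩
  · refine ⟨?_, fun _ _ => add_smul_one_apply_of_not_le hA _⟩
    rw [trace_add_smul_one]
    linear_combination -ht
  · refine ⟨?_, fun _ _ => add_smul_one_apply_of_not_le hD _⟩
    rw [trace_add_smul_one]
    linear_combination htr + ht
  · ext1
    simp [gAProdLieHom, neg_mul, neg_smul]

theorem FinPoset.IsDisjointSum.isContact_gA_iff (hP : P.IsDisjointSum P₁ P₂ e) (h₁ : 0 < m₁)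
    (h₂ : 0 < m₂) : IsContact (gA P) ↔ lieIndex (gA P₁) = 0 ∧ lieIndex (gA P₂) = 0 := by
  let E := LieEquiv.ofBijective (gAProdLieHom hP)
    ⟨gAProdLieHom_injective hP h₁ h₂, gAProdLieHom_surjective hP h₁ h₂⟩
  rw [← E.isContact_iff, isContact_prod_complex_iff, lieIndex_prod_eq_zero_iff]

end DisjointSum

theorem stmt4_general {n : ℕ} (P : FinPoset n)
    (hdis : ¬ (hasse P).Preconnected) :
    IsContact ↥(gA P) ↔
      ∃ (m₁ m₂ : ℕ) (P₁ : FinPoset m₁) (P₂ : FinPoset m₂) (e : Fin n ≃ (Fin m₁ ⊕ Fin m₂)),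
        0 < m₁ ∧ 0 < m₂ ∧
        (∀ i j : Fin n, P.le i j ↔
          ((∃ a b, e i = Sum.inl a ∧ e j = Sum.inl b ∧ P₁.le a b) ∨
            (∃ a b, e i = Sum.inr a ∧ e j = Sum.inr b ∧ P₂.le a b))) ∧
        lieIndex ↥(gA P₁) = 0 ∧ lieIndex ↥(gA P₂) = 0 := by
  constructor
  · intro hcontact
    obtain ⟨m₁, m₂, P₁, P₂, e, h₁, h₂, hsum⟩ :=
      FinPoset.exists_isDisjointSum_of_not_preconnected hdis
    exact ⟨m₁, m₂, P₁, P₂, e, h₁, h₂, FinPoset.isDisjointSum_iff.mp hsum,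
      (hsum.isContact_gA_iff h₁ h₂).mp hcontact⟩
  · rintro ⟨m₁, m₂, P₁, P₂, e, h₁, h₂, hsum, hindex⟩
    exact ((FinPoset.isDisjointSum_iff.mpr hsum).isContact_gA_iff h₁ h₂).mpr hindex

/-- a disconnected poset of height at most two yields a contact algebra
iff it is the disjoint sum of two Frobenius posets. -/
theorem stmt4 {n : ℕ} (P : FinPoset n)
    (hdis : ¬ (hasse P).Preconnected)
    (hht : ¬ hasChain P 4) :
    IsContact ↥(gA P) ↔
      ∃ (m₁ m₂ : ℕ) (P₁ : FinPoset m₁) (P₂ : FinPoset m₂) (e : Fin n ≃ (Fin m₁ ⊕ Fin m₂)),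
        0 < m₁ ∧ 0 < m₂ ∧
        (∀ i j : Fin n, P.le i j ↔
          ((∃ a b, e i = Sum.inl a ∧ e j = Sum.inl b ∧ P₁.le a b) ∨
            (∃ a b, e i = Sum.inr a ∧ e j = Sum.inr b ∧ P₂.le a b))) ∧
        lieIndex ↥(gA P₁) = 0 ∧ lieIndex ↥(gA P₂) = 0 :=
  stmt4_general P hdis
end

section
/- Let P be a connected finite poset of height two such that g_A(P) is contact. Then no i ∈ P \ Ext(P) satisfies (D(P,i), U(P,i)) = (1,3) or (D(P,i), U(P,i)) = (3,1); equivalently, for no i ∈ P \ Ext(P) is P^i isomorphic to P(1,1,3) or P(3,1,1). -/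
open Matrix

attribute [local instance 100] LieRing.ofAssociativeRing

/-!
Say `i` has exactly one element `j` below it and more than two elements `k` above it (the case
`(D, U) = (3, 1)` is dual). Height two forces `j` to be minimal and every `k` to be maximal, so for
every `y ∈ g_A(P)` the matrix units `E_{ik}`, `E_{jk}` span a subspace on which `ad y` is triangular:
`⁅E_{ik}, y⁆ = (y_kk - y_ii) E_{ik} - y_ji E_{jk}` and `⁅E_{jk}, y⁆ = (y_kk - y_jj) E_{jk}`.
For any `φ`, the conditions `φ x = 0` and `φ ⁅x, ·⁆ = 0` on `x` in this `2U`-dimensional span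
amount to `U + 2` linear equations, so some `x ≠ 0` satisfies them, and its coordinates give a
nonzero vector in the left kernel of `\widehat{B}_φ`.
-/

section Contact

variable {g : Type*} [LieRing g] [LieAlgebra ℂ g] {φ : Module.Dual ℂ g}

lemma vecMul_hatB_cons_repr {m : ℕ} (E : Module.Basis (Fin m) ℂ g) (x : g) :
    Fin.cons 0 (E.repr x) ᵥ* hatB (⇑E) φ = Fin.cons (-φ x) fun j => φ ⁅x, E j⁆ := by
  ext j
  induction j using Fin.cases <;>
  · simp only [hatB, Matrix.vecMul, dotProduct, Fin.sum_univ_succ, Matrix.of_apply, Fin.cases_zero,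
      Fin.cases_succ, Fin.cons_zero, Fin.cons_succ, zero_mul, zero_add]
    conv_rhs => rw [← E.sum_repr x]
    simp only [sum_lie, smul_lie, map_sum, map_smul, smul_eq_mul, mul_neg,
      Finset.sum_neg_distrib]

lemma not_isContactForm_of_mem_kerB {x : g} (hx : x ≠ 0) (hφx : φ x = 0) (hker : x ∈ kerB φ) :
    ¬ IsContactForm g φ := by
  rintro ⟨k, E, hdet⟩
  refine hdet (Matrix.exists_vecMul_eq_zero_iff.mp ⟨Fin.cons 0 (E.repr x), ?_, ?_⟩)
  · intro h
    exact hx (E.repr.map_eq_zero_iff.mp (Finsupp.ext fun b => by simpa using congrFun h b.succ))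
  · rw [vecMul_hatB_cons_repr, hφx, neg_zero]
    ext j
    induction j using Fin.cases
    · rfl
    · exact hker _

lemma not_isContactForm_of_finrank_lt {V W : Type*} [AddCommGroup V] [Module ℂ V]
    [FiniteDimensional ℂ V] [AddCommGroup W] [Module ℂ W] [FiniteDimensional ℂ W]
    {c : V →ₗ[ℂ] g} (hc : Function.Injective c) {L : V →ₗ[ℂ] W}
    (hdim : Module.finrank ℂ W < Module.finrank ℂ V)
    (hL : ∀ v ∈ LinearMap.ker L, φ (c v) = 0 ∧ c v ∈ kerB φ) :
    ¬ IsContactForm g φ := by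
  obtain ⟨v, hv, hv0⟩ :=
    Submodule.exists_mem_ne_zero_of_ne_bot (LinearMap.ker_ne_bot_of_finrank_lt hdim)
  exact not_isContactForm_of_mem_kerB ((map_ne_zero_iff c hc).mpr hv0) (hL v hv).1 (hL v hv).2

/-- For `x = ∑ p, (a p • e p + b p • f p)`, both `φ x` and `φ ⁅x, y⁆` are combinations of the
`|ι| + 2` quantities recorded by `L` below, while `x` ranges over a space of dimension `2 |ι|`. -/
lemma not_isContact_of_lie_triangular {ι : Type*} [Fintype ι] (hι : 2 < Fintype.card ι)
    {e f : ι → g} (hef : LinearIndependent ℂ (Sum.elim e f))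
    (hlie : ∀ y : g, ∃ (t : ι → ℂ) (u v d : ℂ),
      (∀ p, ⁅e p, y⁆ = (t p - u) • e p + d • f p) ∧ ∀ p, ⁅f p, y⁆ = (t p - v) • f p) :
    ¬ IsContact g := by
  rintro ⟨φ, hφ⟩
  let L : (ι ⊕ ι → ℂ) →ₗ[ℂ] (ι → ℂ) × ℂ × ℂ :=
    { toFun := fun w => (fun p => w (.inl p) * φ (e p) + w (.inr p) * φ (f p),
        ∑ p, w (.inl p) * φ (e p), ∑ p, w (.inl p) * φ (f p))
      map_add' := fun w w' => by
        ext <;> simp only [Pi.add_apply, add_mul, Finset.sum_add_distrib, Prod.mk_add_mk]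
        ring
      map_smul' := fun a w => by
        ext <;> simp only [Pi.smul_apply, smul_eq_mul, mul_assoc, RingHom.id_apply, Prod.smul_mk,
          Finset.mul_sum]
        ring }
  refine not_isContactForm_of_finrank_lt
    (linearIndependent_iff_injective_fintypeLinearCombination.mp hef) (L := L) ?_ ?_ hφ
  · simp only [Module.finrank_prod, Module.finrank_fintype_fun_eq_card, Module.finrank_self,
      Fintype.card_sum]
    omega
  · intro w hw
    simp only [LinearMap.mem_ker, L, LinearMap.coe_mk, AddHom.coe_mk, Prod.mk_eq_zero,
      funext_iff, Pi.zero_apply] at hw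
    obtain ⟨hp, he, hf⟩ := hw
    have hcw : Fintype.linearCombination ℂ (Sum.elim e f) w
        = ∑ p, (w (.inl p) • e p + w (.inr p) • f p) := by
      simp [Fintype.linearCombination_apply, Fintype.sum_sum_type, Finset.sum_add_distrib]
    rw [hcw]
    refine ⟨by simpa using Finset.sum_eq_zero fun p _ => hp p, fun y => ?_⟩
    obtain ⟨t, u, v, d, hle, hlf⟩ := hlie y
    simp only [sum_lie, add_lie, smul_lie, hle, hlf, smul_add, smul_smul, map_sum, map_add,
      map_smul, smul_eq_mul]
    calc ∑ p, (w (.inl p) * (t p - u) * φ (e p) + w (.inl p) * d * φ (f p)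
          + w (.inr p) * (t p - v) * φ (f p))
        = ∑ p, ((t p - v) * (w (.inl p) * φ (e p) + w (.inr p) * φ (f p))
          + (v - u) * (w (.inl p) * φ (e p)) + d * (w (.inl p) * φ (f p))) :=
          Finset.sum_congr rfl fun p _ => by ring
      _ = 0 := by simp [Finset.sum_add_distrib, ← Finset.mul_sum, hp, he, hf]

end Contact

namespace Matrix

variable {m : Type*} [Fintype m] [DecidableEq m] {R : Type*} [CommSemiring R] {y : Matrix m m R}

lemma mul_single_one_of_col_eq_zero {q : m} (hy : ∀ r, r ≠ q → y r q = 0) (u : m) :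
    y * single q u 1 = y q q • single q u 1 := by
  ext r s
  by_cases hs : s = u
  · subst hs
    rw [mul_single_apply_same, mul_one]
    by_cases hr : r = q
    · simp [hr]
    · simp [hy r hr, Ne.symm hr]
  · simp [mul_single_apply_of_ne (hbj := hs), Ne.symm hs]

lemma mul_single_one_of_col_eq_zero₂ {u w : m} (hwu : w ≠ u)
    (hy : ∀ r, r ≠ u → r ≠ w → y r u = 0) (q : m) :
    y * single u q 1 = y u u • single u q 1 + y w u • single w q 1 := by
  ext r s
  by_cases hs : s = q
  · subst hs
    rw [mul_single_apply_same, mul_one]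
    by_cases hru : r = u
    · simp [hru, hwu]
    by_cases hrw : r = w
    · simp [hrw, hwu.symm]
    · simp [hy r hru hrw, Ne.symm hru, Ne.symm hrw]
  · simp [mul_single_apply_of_ne (hbj := hs), Ne.symm hs]

lemma single_one_mul_of_row_eq_zero {q : m} (hy : ∀ s, s ≠ q → y q s = 0) (u : m) :
    single u q 1 * y = y q q • single u q 1 := by
  rw [← transpose_inj, transpose_mul, transpose_single, transpose_smul, transpose_single,
    mul_single_one_of_col_eq_zero (y := yᵀ) hy, transpose_apply]

lemma single_one_mul_of_row_eq_zero₂ {u w : m} (hwu : w ≠ u)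
    (hy : ∀ s, s ≠ u → s ≠ w → y u s = 0) (q : m) :
    single q u 1 * y = y u u • single q u 1 + y u w • single q w 1 := by
  rw [← transpose_inj, transpose_mul, transpose_single, transpose_add, transpose_smul,
    transpose_smul, transpose_single, transpose_single,
    mul_single_one_of_col_eq_zero₂ (y := yᵀ) hwu hy, transpose_apply, transpose_apply]

end Matrix

namespace FinPoset

variable {n : ℕ} (P : FinPoset n)

lemma lt_trans {i j k : Fin n} (hij : P.lt i j) (hjk : P.lt j k) : P.lt i k := by
  refine ⟨P.le_trans _ _ _ hij.1 hjk.1, ?_⟩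
  rintro rfl
  exact hij.2 (P.le_antisymm _ _ hij.1 hjk.1)

lemma hasChain_four_of_lt {u v w z : Fin n} (huv : P.lt u v) (hvw : P.lt v w) (hwz : P.lt w z) :
    hasChain P 4 := by
  have huw := P.lt_trans huv hvw
  have hvz := P.lt_trans hvw hwz
  have huz := P.lt_trans huw hwz
  refine ⟨{u, v, w, z}, Finset.card_eq_four.mpr ⟨u, v, w, z, huv.2, huw.2, huz.2, hvw.2, hvz.2,
    hwz.2, rfl⟩, ?_⟩
  simp only [Finset.mem_insert, Finset.mem_singleton]
  rintro x (rfl | rfl | rfl | rfl) y (rfl | rfl | rfl | rfl) <;>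
    first
      | exact Or.inl (P.le_refl _)
      | exact Or.inl ‹P.lt _ _›.1
      | exact Or.inr ‹P.lt _ _›.1

end FinPoset

namespace gA

variable {n : ℕ} {P : FinPoset n}

def single {i j : Fin n} (h : P.lt i j) : gA P :=
  ⟨Matrix.single i j 1, Matrix.trace_single_eq_of_ne _ _ _ h.2, fun _ _ hrs => by
    rw [Matrix.single_apply_of_ne]
    rintro ⟨rfl, rfl⟩
    exact hrs h.1⟩

@[simp]
lemma coe_single {i j : Fin n} (h : P.lt i j) :
    (single h : Matrix (Fin n) (Fin n) ℂ) = Matrix.single i j 1 := rfl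

lemma coe_lie_single {i j : Fin n} (h : P.lt i j) (y : gA P) :
    ((⁅single h, y⁆ : gA P) : Matrix (Fin n) (Fin n) ℂ)
      = Matrix.single i j 1 * (y : Matrix (Fin n) (Fin n) ℂ)
        - (y : Matrix (Fin n) (Fin n) ℂ) * Matrix.single i j 1 := rfl

lemma apply_eq_zero (y : gA P) {r s : Fin n} (h : ¬ P.le r s) : (y : Matrix _ _ ℂ) r s = 0 :=
  y.2.2 r s h

lemma linearIndependent_sumElim_single {ι : Type*} {r₁ s₁ r₂ s₂ : ι → Fin n}
    (h₁ : ∀ k, P.lt (r₁ k) (s₁ k)) (h₂ : ∀ k, P.lt (r₂ k) (s₂ k))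
    (hinj : Function.Injective (Sum.elim (fun k => (r₁ k, s₁ k)) fun k => (r₂ k, s₂ k))) :
    LinearIndependent ℂ (Sum.elim (fun k => single (h₁ k)) fun k => single (h₂ k)) := by
  refine LinearIndependent.of_comp (gA P).incl.toLinearMap ?_
  have hcomp :
      (gA P).incl.toLinearMap ∘ Sum.elim (fun k => single (h₁ k)) (fun k => single (h₂ k))
        = Matrix.stdBasis ℂ (Fin n) (Fin n) ∘
          Sum.elim (fun k => (r₁ k, s₁ k)) fun k => (r₂ k, s₂ k) := by
    ext (k | k) : 1 <;> simp [Matrix.stdBasis_eq_single]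
  rw [hcomp]
  exact (Matrix.stdBasis ℂ (Fin n) (Fin n)).linearIndependent.comp _ hinj

end gA

section MatrixUnitConfigurations

open gA

variable {n : ℕ} {P : FinPoset n}

lemma not_isContact_of_below_eq_singleton {i j : Fin n} (hbelow : ∀ k, P.lt k i ↔ k = j)
    (hj : ∀ k, P.le k j → k = j) (habove : ∀ k, P.lt i k → ∀ l, P.le k l → l = k)
    (hU : 2 < upDeg P i) : ¬ IsContact (gA P) := by
  classical
  have hji : P.lt j i := (hbelow j).2 rfl
  let e : {k // P.lt i k} → gA P := fun k => single k.2
  let f : {k // P.lt i k} → gA P := fun k => single (P.lt_trans hji k.2)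
  refine not_isContact_of_lie_triangular (e := e) (f := f) ?_ ?_ fun y => ?_
  · rw [← Nat.card_eq_fintype_card]
    exact hU
  · exact linearIndependent_sumElim_single _ _ <| Function.Injective.sumElim
      ((Prod.mk_right_injective i).comp Subtype.val_injective)
      ((Prod.mk_right_injective j).comp Subtype.val_injective)
      fun _ _ h => hji.2 (Prod.ext_iff.mp h).1.symm
  have hrow (k : {k // P.lt i k}) (s : Fin n) (hs : s ≠ k) : y.1 k s = 0 :=
    apply_eq_zero y fun h => hs (habove k k.2 s h)
  have hcoli (r : Fin n) (hri : r ≠ i) (hrj : r ≠ j) : y.1 r i = 0 :=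
    apply_eq_zero y fun h => hrj ((hbelow r).1 ⟨h, hri⟩)
  have hcolj (r : Fin n) (hrj : r ≠ j) : y.1 r j = 0 :=
    apply_eq_zero y fun h => hrj (hj r h)
  refine ⟨fun k => y.1 k k, y.1 i i, y.1 j j, -y.1 j i, fun k => Subtype.ext ?_,
    fun k => Subtype.ext ?_⟩
  · rw [coe_lie_single, Matrix.single_one_mul_of_row_eq_zero (hrow k),
      Matrix.mul_single_one_of_col_eq_zero₂ hji.2 hcoli]
    simp only [e, f, AddMemClass.coe_add, SetLike.val_smul, coe_single]
    module
  · rw [coe_lie_single, Matrix.single_one_mul_of_row_eq_zero (hrow k),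
      Matrix.mul_single_one_of_col_eq_zero hcolj]
    simp only [f, SetLike.val_smul, coe_single]
    module

lemma not_isContact_of_above_eq_singleton {i j : Fin n} (habove : ∀ k, P.lt i k ↔ k = j)
    (hj : ∀ k, P.le j k → k = j) (hbelow : ∀ k, P.lt k i → ∀ l, P.le l k → l = k)
    (hD : 2 < downDeg P i) : ¬ IsContact (gA P) := by
  classical
  have hij : P.lt i j := (habove j).2 rfl
  let e : {k // P.lt k i} → gA P := fun k => single k.2
  let f : {k // P.lt k i} → gA P := fun k => single (P.lt_trans k.2 hij)
  refine not_isContact_of_lie_triangular (e := e) (f := f) ?_ ?_ fun y => ?_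
  · rw [← Nat.card_eq_fintype_card]
    exact hD
  · exact linearIndependent_sumElim_single _ _ <| Function.Injective.sumElim
      ((Prod.mk_left_injective i).comp Subtype.val_injective)
      ((Prod.mk_left_injective j).comp Subtype.val_injective)
      fun _ _ h => hij.2 (Prod.ext_iff.mp h).2
  have hcol (k : {k // P.lt k i}) (r : Fin n) (hr : r ≠ k) : y.1 r k = 0 :=
    apply_eq_zero y fun h => hr (hbelow k k.2 r h)
  have hrowi (s : Fin n) (hsi : s ≠ i) (hsj : s ≠ j) : y.1 i s = 0 :=
    apply_eq_zero y fun h => hsj ((habove s).1 ⟨h, Ne.symm hsi⟩)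
  have hrowj (s : Fin n) (hsj : s ≠ j) : y.1 j s = 0 :=
    apply_eq_zero y fun h => hsj (hj s h)
  refine ⟨fun k => -y.1 k k, -y.1 i i, -y.1 j j, y.1 i j, fun k => Subtype.ext ?_,
    fun k => Subtype.ext ?_⟩
  · rw [coe_lie_single, Matrix.single_one_mul_of_row_eq_zero₂ hij.2.symm hrowi,
      Matrix.mul_single_one_of_col_eq_zero (hcol k)]
    simp only [e, f, AddMemClass.coe_add, SetLike.val_smul, coe_single]
    module
  · rw [coe_lie_single, Matrix.single_one_mul_of_row_eq_zero hrowj,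
      Matrix.mul_single_one_of_col_eq_zero (hcol k)]
    simp only [f, SetLike.val_smul, coe_single]
    module

end MatrixUnitConfigurations

section HeightTwo

variable {n : ℕ} {P : FinPoset n}

lemma not_isContact_of_downDeg_eq_one (hP : ¬ hasChain P 4) {i : Fin n}
    (hD : downDeg P i = 1) (hU : 2 < upDeg P i) : ¬ IsContact (gA P) := by
  obtain ⟨j, hj⟩ := Set.ncard_eq_one.mp hD
  have hbelow (k : Fin n) : P.lt k i ↔ k = j := Set.ext_iff.mp hj k
  have hji : P.lt j i := (hbelow j).2 rfl
  obtain ⟨a, ha⟩ : ∃ a, P.lt i a :=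
    Set.nonempty_of_ncard_ne_zero (show upDeg P i ≠ 0 by omega)
  refine not_isContact_of_below_eq_singleton hbelow (fun k hk => ?_) (fun k hk l hl => ?_) hU
  · by_contra hne
    exact hP (P.hasChain_four_of_lt ⟨hk, hne⟩ hji ha)
  · by_contra hne
    exact hP (P.hasChain_four_of_lt hji hk ⟨hl, Ne.symm hne⟩)

lemma not_isContact_of_upDeg_eq_one (hP : ¬ hasChain P 4) {i : Fin n}
    (hU : upDeg P i = 1) (hD : 2 < downDeg P i) : ¬ IsContact (gA P) := by
  obtain ⟨j, hj⟩ := Set.ncard_eq_one.mp hU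
  have habove (k : Fin n) : P.lt i k ↔ k = j := Set.ext_iff.mp hj k
  have hij : P.lt i j := (habove j).2 rfl
  obtain ⟨a, ha⟩ : ∃ a, P.lt a i :=
    Set.nonempty_of_ncard_ne_zero (show downDeg P i ≠ 0 by omega)
  refine not_isContact_of_above_eq_singleton habove (fun k hk => ?_) (fun k hk l hl => ?_) hD
  · by_contra hne
    exact hP (P.hasChain_four_of_lt ha hij ⟨hk, Ne.symm hne⟩)
  · by_contra hne
    exact hP (P.hasChain_four_of_lt ⟨hl, hne⟩ hk hij)

end HeightTwo

theorem stmt7_general {n : ℕ} (P : FinPoset n)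
    (hht : heightEq P 2)
    (hcon : IsContact ↥(gA P)) :
    ∀ i : Fin n, i ∉ extSet P →
      ¬ ((downDeg P i, upDeg P i) = (1, 3) ∨ (downDeg P i, upDeg P i) = (3, 1)) := by
  intro i _ hdeg
  simp only [Prod.mk.injEq] at hdeg
  rcases hdeg with ⟨hD, hU⟩ | ⟨hD, hU⟩
  · exact not_isContact_of_downDeg_eq_one hht.2 hD (by omega) hcon
  · exact not_isContact_of_upDeg_eq_one hht.2 hU (by omega) hcon

/-- in a connected height-two poset with `g_A(P)` contact, no interior
element has `(D(P,i), U(P,i))` equal to `(1,3)` or `(3,1)`. -/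
theorem stmt7 {n : ℕ} (P : FinPoset n)
    (hconn : (hasse P).Connected) (hht : heightEq P 2)
    (hcon : IsContact ↥(gA P)) :
    ∀ i : Fin n, i ∉ extSet P →
      ¬ ((downDeg P i, upDeg P i) = (1, 3) ∨ (downDeg P i, upDeg P i) = (3, 1)) :=
  stmt7_general P hht hcon
end

section
/- Let g be the 7-dimensional complex Lie algebra with basis e_1,…,e_7 whose only nonzero brackets among basis elements (up to skew-symmetry) are [e_1,e_4]=2e_4, [e_2,e_4]=e_4, [e_1,e_5]=e_5, [e_2,e_5]=2e_5, [e_3,e_5]=e_5, [e_1,e_6]=e_6, [e_3,e_6]=e_6, [e_2,e_7]=e_7, and [e_3,e_7]=2e_7. Then ind g = 1, but g is not contact. -/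
open Matrix

attribute [local instance] LieRing.ofAssociativeRing

/-! Write `c k = φ (e k)`; the Kirillov matrix of `φ` in the basis `e` depends only on
`c 3, …, c 6`. If some `c k` with `k ≥ 3` vanishes, then `e k` lies in `ker B_φ ∩ ker φ`.
Otherwise `ker B_φ` is spanned by `x = e 3 / c 3 - e 4 / c 4 - e 5 / c 5 + e 6 / c 6`, and
`φ x = 1 - 1 - 1 + 1 = 0`. So `ker B_φ` is never zero, which gives `ind g ≥ 1`, and it is a line
for `c = (0, 0, 0, 1, 1, 1, 1)`. A nonzero `x ∈ ker B_φ ∩ ker φ` makes `(0, x)` a null vector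
of `\widehat{B}_φ`, so no `φ` is a contact form. -/

section Kirillov

variable {ι g : Type*} [Fintype ι] [LieRing g] [LieAlgebra ℂ g]

lemma Module.Basis.apply_eq_equivFun_dotProduct (e : Module.Basis ι ℂ g) (L : g →ₗ[ℂ] ℂ)
    (x : g) : L x = e.equivFun x ⬝ᵥ fun i => L (e i) := by
  calc L x = L (∑ i, e.equivFun x i • e i) := by rw [e.sum_equivFun]
    _ = _ := by simp only [map_sum, map_smul, smul_eq_mul, dotProduct]

noncomputable def kirillovMatrix (e : Module.Basis ι ℂ g) (φ : Module.Dual ℂ g) :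
    Matrix ι ι ℂ :=
  Matrix.of fun i j => φ ⁅e i, e j⁆

lemma mem_kerB_iff_vecMul_kirillovMatrix (e : Module.Basis ι ℂ g) {φ : Module.Dual ℂ g}
    {x : g} : x ∈ kerB φ ↔ e.equivFun x ᵥ* kirillovMatrix e φ = 0 := by
  have hcoord : ∀ j, φ ⁅x, e j⁆ = (e.equivFun x ᵥ* kirillovMatrix e φ) j := fun j =>
    e.apply_eq_equivFun_dotProduct (φ ∘ₗ (LieModule.toEnd ℂ g g).toLinearMap.flip (e j)) x
  have hbasis : x ∈ kerB φ ↔ ∀ j, φ ⁅x, e j⁆ = 0 := by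
    refine ⟨fun hx j => hx (e j), fun hx y => ?_⟩
    exact (e.apply_eq_equivFun_dotProduct (φ ∘ₗ LieModule.toEnd ℂ g g x) y).trans
      (by simp [hx])
  simp only [hbasis, hcoord, funext_iff, Pi.zero_apply]

lemma kerB_eq_map (e : Module.Basis ι ℂ g) (φ : Module.Dual ℂ g) :
    kerB φ =
      (LinearMap.ker (kirillovMatrix e φ).vecMulLinear).map e.equivFun.symm.toLinearMap := by
  ext x
  rw [mem_kerB_iff_vecMul_kirillovMatrix e, ← LinearEquiv.coe_toLinearMap,
    ← Submodule.comap_equiv_eq_map_symm]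
  rfl

lemma lieIndex_eq_of {d : ℕ} (hex : ∃ φ : Module.Dual ℂ g, Module.finrank ℂ (kerB φ) = d)
    (hle : ∀ φ : Module.Dual ℂ g, d ≤ Module.finrank ℂ (kerB φ)) : lieIndex g = d :=
  le_antisymm (Nat.sInf_le hex) (le_csInf ⟨d, hex⟩ (by rintro _ ⟨φ, rfl⟩; exact hle φ))

lemma IsContactForm.eq_zero_of_mem_kerB {φ : Module.Dual ℂ g} (hφ : IsContactForm g φ) {x : g}
    (hx : x ∈ kerB φ) (hφx : φ x = 0) : x = 0 := by
  obtain ⟨k, E, hdet⟩ := hφ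
  by_contra hx0
  refine hdet (Matrix.exists_mulVec_eq_zero_iff.mp ⟨Fin.cons 0 (E.equivFun x), ?_, ?_⟩)
  · exact fun h => hx0 (E.equivFun.map_eq_zero_iff.mp (congrArg Fin.tail h))
  · ext i
    induction i using Fin.cases with
    | zero =>
      rw [mulVec, dotProduct, Fin.sum_univ_succ]
      simpa [hatB, dotProduct, mul_comm, hφx] using (E.apply_eq_equivFun_dotProduct φ x).symm
    | succ i =>
      have hxi : φ ⁅E i, x⁆ = 0 := by rw [← lie_skew, map_neg, hx (E i), neg_zero]
      rw [mulVec, dotProduct, Fin.sum_univ_succ]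
      simpa [hatB, dotProduct, mul_comm, hxi] using
        (E.apply_eq_equivFun_dotProduct (φ ∘ₗ LieModule.toEnd ℂ g g (E i)) x).symm

end Kirillov

def modelKirillovMatrix (f : Fin 7 → ℂ) : Matrix (Fin 7) (Fin 7) ℂ :=
  !![0, 0, 0, 2 * f 3, f 4, f 5, 0;
     0, 0, 0, f 3, 2 * f 4, 0, f 6;
     0, 0, 0, 0, f 4, f 5, 2 * f 6;
     -(2 * f 3), -f 3, 0, 0, 0, 0, 0;
     -f 4, -(2 * f 4), -f 4, 0, 0, 0, 0;
     -f 5, 0, -f 5, 0, 0, 0, 0;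
     0, -f 6, -(2 * f 6), 0, 0, 0, 0]

lemma exists_ne_zero_dotProduct_eq_zero_vecMul_modelKirillovMatrix (f : Fin 7 → ℂ) :
    ∃ a ≠ 0, a ⬝ᵥ f = 0 ∧ a ᵥ* modelKirillovMatrix f = 0 := by
  have hsingle : ∀ k : Fin 7, 3 ≤ k → f k = 0 →
      ∃ a ≠ 0, a ⬝ᵥ f = 0 ∧ a ᵥ* modelKirillovMatrix f = 0 := by
    intro k hk hfk
    refine ⟨Pi.single k 1, by simp, by simpa using hfk, ?_⟩
    rw [single_one_vecMul]
    ext j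
    fin_cases k <;> first
      | exact absurd hk (by decide)
      | fin_cases j <;> simp [modelKirillovMatrix] <;> exact hfk
  by_cases h3 : f 3 = 0
  · exact hsingle 3 (by decide) h3
  by_cases h4 : f 4 = 0
  · exact hsingle 4 (by decide) h4
  by_cases h5 : f 5 = 0
  · exact hsingle 5 (by decide) h5
  by_cases h6 : f 6 = 0
  · exact hsingle 6 (by decide) h6
  refine ⟨![0, 0, 0, f 4 * f 5 * f 6, -(f 3 * f 5 * f 6), -(f 3 * f 4 * f 6), f 3 * f 4 * f 5],
    fun h => ?_, ?_, ?_⟩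
  · exact mul_ne_zero (mul_ne_zero h3 h4) h5 (by simpa using congrFun h 6)
  · simp only [dotProduct, Fin.sum_univ_seven, cons_val]
    ring
  · ext j
    fin_cases j <;> simp [modelKirillovMatrix, vecMul, dotProduct, Fin.sum_univ_succ] <;> ring

lemma ker_vecMulLinear_modelKirillovMatrix :
    LinearMap.ker (modelKirillovMatrix ![0, 0, 0, 1, 1, 1, 1]).vecMulLinear =
      ℂ ∙ ![0, 0, 0, 1, -1, -1, 1] := by
  ext a
  rw [LinearMap.mem_ker, Matrix.coe_vecMulLinear, Submodule.mem_span_singleton]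
  constructor
  · intro h
    have col : ∀ j, (a ᵥ* modelKirillovMatrix ![0, 0, 0, 1, 1, 1, 1]) j = 0 := fun j =>
      congrFun h j
    have c0 := col 0; have c1 := col 1; have c2 := col 2; have c3 := col 3
    have c4 := col 4; have c5 := col 5; have c6 := col 6
    simp only [modelKirillovMatrix, vecMul, dotProduct, Fin.sum_univ_seven, of_apply, cons_val,
      mul_zero, mul_one, mul_neg, add_zero, zero_add] at c0 c1 c2 c3 c4 c5 c6
    refine ⟨a 3, ?_⟩
    ext j
    fin_cases j <;> simp only [Fin.reduceFinMk, Fin.isValue, Pi.smul_apply, cons_val, smul_eq_mul,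
      mul_zero, mul_one, mul_neg]
    · linear_combination (c6 - c3 - 2 * c5) / 4
    · linear_combination -(c3 / 2) + c5 - c6 / 2
    · linear_combination (c3 - 2 * c5 - c6) / 4
    · linear_combination c1 / 2 + (c0 - c2) / 4
    · linear_combination (3 * c0 - 2 * c1 + c2) / 4
    · linear_combination (c2 - c0) / 2
  · rintro ⟨t, rfl⟩
    ext j
    fin_cases j <;> simp [modelKirillovMatrix, vecMul, dotProduct, Fin.sum_univ_succ] <;> ring

/-- the 7-dimensional Lie algebra with the indicated structure constants
has index one but is not contact. -/
theorem stmt11 (g : Type) [LieRing g] [LieAlgebra ℂ g]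
    (e : Module.Basis (Fin 7) ℂ g)
    (h14 : ⁅e 0, e 3⁆ = (2 : ℂ) • e 3)
    (h24 : ⁅e 1, e 3⁆ = e 3)
    (h15 : ⁅e 0, e 4⁆ = e 4)
    (h25 : ⁅e 1, e 4⁆ = (2 : ℂ) • e 4)
    (h35 : ⁅e 2, e 4⁆ = e 4)
    (h16 : ⁅e 0, e 5⁆ = e 5)
    (h36 : ⁅e 2, e 5⁆ = e 5)
    (h27 : ⁅e 1, e 6⁆ = e 6)
    (h37 : ⁅e 2, e 6⁆ = (2 : ℂ) • e 6)
    (hzero : ∀ i j : Fin 7, i < j →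
      (i, j) ∉ ({(0, 3), (1, 3), (0, 4), (1, 4), (2, 4), (0, 5), (2, 5), (1, 6), (2, 6)} :
        Set (Fin 7 × Fin 7)) →
      ⁅e i, e j⁆ = 0) :
    lieIndex g = 1 ∧ ¬ IsContact g := by
  have := Module.Finite.of_basis e
  have hmodel (φ : Module.Dual ℂ g) :
      kirillovMatrix e φ = modelKirillovMatrix fun k => φ (e k) := by
    ext i j
    rw [kirillovMatrix, Matrix.of_apply]
    fin_cases i <;> fin_cases j <;> first
      | (simp [modelKirillovMatrix, h14, h24, h15, h25, h35, h16, h36, h27, h37, hzero]; done)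
      | (rw [← lie_skew]
         simp [modelKirillovMatrix, h14, h24, h15, h25, h35, h16, h36, h27, h37, hzero])
  have hnull (φ : Module.Dual ℂ g) : ∃ x ∈ kerB φ, x ≠ 0 ∧ φ x = 0 := by
    obtain ⟨a, ha0, haf, hker⟩ :=
      exists_ne_zero_dotProduct_eq_zero_vecMul_modelKirillovMatrix fun k => φ (e k)
    refine ⟨e.equivFun.symm a, ?_, e.equivFun.symm.map_ne_zero_iff.mpr ha0, ?_⟩
    · rwa [mem_kerB_iff_vecMul_kirillovMatrix e, hmodel, LinearEquiv.apply_symm_apply]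
    · rwa [e.apply_eq_equivFun_dotProduct φ, LinearEquiv.apply_symm_apply]
  refine ⟨lieIndex_eq_of ⟨e.constr ℂ ![0, 0, 0, 1, 1, 1, 1], ?_⟩ fun φ => ?_, ?_⟩
  · rw [kerB_eq_map e, hmodel, funext (e.constr_basis ℂ _), ker_vecMulLinear_modelKirillovMatrix,
      LinearEquiv.finrank_map_eq, finrank_span_singleton]
    simp
  · obtain ⟨x, hx, hx0, -⟩ := hnull φ
    exact Submodule.one_le_finrank_iff.mpr fun h => hx0 (by simpa [h] using hx)
  · rintro ⟨φ, hφ⟩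
    obtain ⟨x, hx, hx0, hφx⟩ := hnull φ
    exact hx0 (hφ.eq_zero_of_mem_kerB hx hφx)
end

section
/- Let g be a complex Lie algebra of odd dimension 2k+1 with ind g = 1, and let φ ∈ g* be a regular one-form, i.e., dim ker B_φ = 1. If L spans ker B_φ and φ(L) ≠ 0, then det(\widehat{B}_φ) = φ(L)^2 · det(B'_φ) ≠ 0, where B'_φ is the matrix of B_φ in a basis containing L with the row and column corresponding to L removed; in particular, φ is a contact form and g is contact. -/
open Matrix

attribute [local instance 100] LieRing.ofAssociativeRing

/-! Since `L` lies in the kernel of `B_φ`, the row and the column of `\widehat{B}_φ` indexed by `L`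
vanish except for the entries `±φ(L)`, and expanding along them gives `φ(L)² · det B'_φ`.
A null vector `v` of `B'_φ` would give an element `∑ vⱼ Eⱼ₊₁` of `ker B_φ = ℂ L` independent
of `L`, so `det B'_φ ≠ 0`. Finally, `L ≠ 0` extends to a basis starting with `L`. -/

theorem Matrix.det_succ_succ_of_row_one_col_one {R : Type*} [CommRing R] {m : ℕ}
    (A : Matrix (Fin (m + 2)) (Fin (m + 2)) R)
    (hrow : ∀ j, j ≠ 0 → A 1 j = 0) (hcol : ∀ i, i ≠ 0 → A i 1 = 0) :
    A.det = -(A 1 0 * A 0 1) *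
      (A.submatrix (Fin.succ ∘ Fin.succ) (Fin.succ ∘ Fin.succ)).det := by
  rw [det_succ_row A 1, Fintype.sum_eq_single 0 fun j hj => by rw [hrow j hj]; ring,
    det_succ_column_zero, Fintype.sum_eq_single 0 fun i hi => ?_]
  · simp [Function.comp_def]
    ring
  · simp [hcol _ (Fin.succAbove_ne_zero one_ne_zero hi)]

section

variable {g : Type*} [LieRing g] [LieAlgebra ℂ g] {φ : Module.Dual ℂ g}

theorem mem_kerB_iff' {x : g} : x ∈ kerB φ ↔ ∀ y : g, φ ⁅y, x⁆ = 0 :=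
  forall_congr' fun y => by rw [← lie_skew, map_neg, neg_eq_zero]

theorem mem_kerB_of_basis {ι : Type*} (E : Module.Basis ι ℂ g) {x : g}
    (h : ∀ i, φ ⁅E i, x⁆ = 0) : x ∈ kerB φ := by
  have : φ ∘ₗ LieModule.toEnd ℂ g g x = 0 :=
    E.ext fun i => by
      rw [LinearMap.comp_apply, LieModule.toEnd_apply_apply, ← lie_skew, map_neg, h i, neg_zero,
        LinearMap.zero_apply]
  exact fun y => LinearMap.congr_fun this y

@[simp] theorem hatB_zero_succ {m : ℕ} (E : Fin m → g) (j : Fin m) :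
    hatB E φ 0 j.succ = φ (E j) := rfl

@[simp] theorem hatB_succ_zero {m : ℕ} (E : Fin m → g) (i : Fin m) :
    hatB E φ i.succ 0 = -φ (E i) := rfl

theorem det_hatB_of_mem_kerB {m : ℕ} (E : Fin (m + 1) → g) (h : E 0 ∈ kerB φ) :
    (hatB E φ).det = φ (E 0) ^ 2 * (of fun i j : Fin m => φ ⁅E i.succ, E j.succ⁆).det := by
  have hone : (1 : Fin (m + 2)) = Fin.succ 0 := rfl
  rw [Matrix.det_succ_succ_of_row_one_col_one, hone]
  · rw [hatB_succ_zero, hatB_zero_succ]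
    change -(-φ (E 0) * φ (E 0)) * (of fun i j : Fin m => φ ⁅E i.succ, E j.succ⁆).det = _
    ring
  · intro j hj
    obtain ⟨j, rfl⟩ := Fin.exists_succ_eq.2 hj
    exact h _
  · intro i hi
    obtain ⟨i, rfl⟩ := Fin.exists_succ_eq.2 hi
    exact mem_kerB_iff'.1 h _

theorem det_lie_succ_succ_ne_zero_of_kerB_eq_span {m : ℕ} (E : Module.Basis (Fin (m + 1)) ℂ g)
    (h : kerB φ = Submodule.span ℂ {E 0}) :
    (of fun i j : Fin m => φ ⁅E i.succ, E j.succ⁆).det ≠ 0 := by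
  intro hdet
  obtain ⟨v, hv0, hv⟩ := exists_mulVec_eq_zero_iff.mpr hdet
  set x := E.equivFun.symm (Fin.cons 0 v)
  have hE0 : E 0 ∈ kerB φ := h ▸ Submodule.mem_span_singleton_self _
  have hx : x ∈ kerB φ := mem_kerB_of_basis E <| Fin.cases (hE0 x) fun i => by
    simpa [x, Module.Basis.equivFun_symm_apply, Fin.sum_univ_succ, mulVec, dotProduct, lie_sum,
      mul_comm]
      using congrFun hv i
  rw [h] at hx
  obtain ⟨c, hc⟩ := Submodule.mem_span_singleton.mp hx
  have hcoord : E.equivFun x = Fin.cons 0 v := E.equivFun.apply_symm_apply _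
  rw [← hc] at hcoord
  exact hv0 (funext fun j => by simpa using (congrFun hcoord j.succ).symm)

end

theorem Module.exists_basis_fin_apply_zero_eq {K V : Type*} [DivisionRing K] [AddCommGroup V]
    [Module K V] {n : ℕ} (hn : finrank K V = n + 1) {v : V} (hv : v ≠ 0) :
    ∃ E : Basis (Fin (n + 1)) K V, E 0 = v := by
  have : Module.Finite K V := Module.finite_of_finrank_eq_succ hn
  have hs : LinearIndepOn K id {v} := LinearIndepOn.singleton (v := id) hv
  let b := Basis.extend hs
  let e := b.indexEquiv (finBasisOfFinrankEq K V hn)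
  let i₀ : hs.extend (Set.subset_univ _) := ⟨v, Basis.subset_extend hs rfl⟩
  refine ⟨(b.reindex e).reindex (Equiv.swap (e i₀) 0), ?_⟩
  simp [b, i₀]

theorem stmt12_general (g : Type) [LieRing g] [LieAlgebra ℂ g]
    (k : ℕ) (hdim : Module.finrank ℂ g = 2 * k + 1)
    (φ : Module.Dual ℂ g)
    (L : g) (hker : (kerB φ : Submodule ℂ g) = Submodule.span ℂ {L})
    (hφL : φ L ≠ 0) :
    (∀ E : Module.Basis (Fin (2 * k + 1)) ℂ g, E 0 = L →
      (hatB (⇑E) φ).det =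
          (φ L) ^ 2 * (Matrix.of fun i j : Fin (2 * k) => φ ⁅E i.succ, E j.succ⁆).det ∧
        (hatB (⇑E) φ).det ≠ 0) ∧
    IsContactForm g φ ∧ IsContact g := by
  have hL : L ∈ kerB φ := hker ▸ Submodule.mem_span_singleton_self L
  have hdet : ∀ E : Module.Basis (Fin (2 * k + 1)) ℂ g, E 0 = L →
      (hatB (⇑E) φ).det =
          (φ L) ^ 2 * (Matrix.of fun i j : Fin (2 * k) => φ ⁅E i.succ, E j.succ⁆).det ∧
        (hatB (⇑E) φ).det ≠ 0 := by
    rintro E rfl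
    rw [det_hatB_of_mem_kerB E hL]
    exact ⟨rfl, mul_ne_zero (pow_ne_zero 2 hφL) (det_lie_succ_succ_ne_zero_of_kerB_eq_span E hker)⟩
  have hL0 : L ≠ 0 := by rintro rfl; exact hφL (map_zero φ)
  obtain ⟨E, hE⟩ := Module.exists_basis_fin_apply_zero_eq hdim hL0
  have hcontact : IsContactForm g φ := ⟨k, E, (hdet E hE).2⟩
  exact ⟨hdet, hcontact, φ, hcontact⟩

/-- an odd-dimensional Lie algebra of index one with a regular one-form
`φ` whose Kirillov kernel is spanned by `L` with `φ(L) ≠ 0` is contact with contact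
form `φ`; moreover, for any basis beginning with `L`, the determinant of `\widehat{B}_φ`
equals `φ(L)² · det(B'_φ)` and is nonzero. -/
theorem stmt12 (g : Type) [LieRing g] [LieAlgebra ℂ g]
    (k : ℕ) (hdim : Module.finrank ℂ g = 2 * k + 1)
    (hind : lieIndex g = 1)
    (φ : Module.Dual ℂ g)
    (hreg : Module.finrank ℂ (kerB φ) = 1)
    (L : g) (hker : (kerB φ : Submodule ℂ g) = Submodule.span ℂ {L})
    (hφL : φ L ≠ 0) :
    (∀ E : Module.Basis (Fin (2 * k + 1)) ℂ g, E 0 = L →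
      (hatB (⇑E) φ).det =
          (φ L) ^ 2 * (Matrix.of fun i j : Fin (2 * k) => φ ⁅E i.succ, E j.succ⁆).det ∧
        (hatB (⇑E) φ).det ≠ 0) ∧
    IsContactForm g φ ∧ IsContact g :=
  stmt12_general g k hdim φ L hker hφL
end
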